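/- arXiv:2112.08484 — 9 statements merged into one kernel-verified Lean document; each statement's English description precedes it below -/
import Mathlib

section
/- Let G be a monoid, A a set, D ⊂ G a finite subset and P ⊂ A^D a subset, and let Σ = Σ(A^G; D, P). Then for every subset E ⊂ G with D ⊂ E one has Σ = Σ(A^G; E, Σ_E), where Σ(A^G; E, Σ_E) := {x ∈ A^G : (g⋆x)|_E ∈ Σ_E for all g ∈ G}. (Base change of defining windows for subshifts of finite type.) -/
/-- The Bernoulli right shift: `(g ⋆ x)(h) = x (h * g)`. -/
def bshift {G A : Type} [Mul G] (g : G) (x : G → A) : G → A := fun h => x (h * g)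

/-- A subshift is a `G`-invariant subset of `A^G`. -/
def IsSubshift {G A : Type} [Monoid G] (S : Set (G → A)) : Prop :=
  ∀ g : G, ∀ x ∈ S, bshift g x ∈ S

/-- The restriction `Δ_E = {x|_E : x ∈ Δ}` of a set of configurations to `E ⊆ G`. -/
def resSet {G A : Type} (S : Set (G → A)) (E : Set G) : Set (↥E → A) :=
  (fun x (e : ↥E) => x e) '' S

/-- `Σ(A^G; D, P) = {x ∈ A^G : (g ⋆ x)|_D ∈ P for all g ∈ G}`. -/
def windowSet {G A : Type} [Monoid G] (D : Set G) (P : Set (↥D → A)) : Set (G → A) :=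
  { x | ∀ g : G, (fun d : ↥D => bshift g x d) ∈ P }

/-- A subshift of finite type: a subset of the form `Σ(A^G; D, P)` with `D` finite. -/
def IsSFT {G A : Type} [Monoid G] (S : Set (G → A)) : Prop :=
  ∃ D : Set G, D.Finite ∧ ∃ P : Set (↥D → A), S = windowSet D P

/-- `τ` is a cellular automaton on the subshift `S`, with (some) finite memory set `M`
and local defining map `μ`, i.e. `τ(x)(g) = μ((g ⋆ x)|_M)` for all `x ∈ S`, `g ∈ G`. -/
def IsCAWith {G A B : Type} [Monoid G] (S : Set (G → A)) (τ : (G → A) → (G → B))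
    (M : Set G) : Prop :=
  ∃ μ : (↥M → A) → B, ∀ x ∈ S, ∀ g : G, τ x g = μ (fun m : ↥M => bshift g x m)

/-- `τ` is a cellular automaton on the subshift `S`. -/
def IsCA {G A B : Type} [Monoid G] (S : Set (G → A)) (τ : (G → A) → (G → B)) : Prop :=
  ∃ M : Set G, M.Finite ∧ IsCAWith S τ M

/-- A sofic subshift: the image of a subshift of finite type under a cellular automaton. -/
def IsSofic {G A : Type} [Monoid G] (S : Set (G → A)) : Prop :=
  ∃ (C : Type) (W : Set (G → C)) (γ : (G → C) → (G → A)),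
    IsSFT W ∧ IsCA W γ ∧ S = γ '' W

/-- Lemma 2.1, base change of defining windows.
If `Σ = Σ(A^G; D, P)` with `D ⊆ G` finite and `P ⊆ A^D`, then for every `E ⊆ G`
with `D ⊆ E` one has `Σ = Σ(A^G; E, Σ_E)`. -/
theorem window_change_sft {G A : Type} [Monoid G]
    (D : Set G) (hD : D.Finite) (P : Set (↥D → A))
    (S : Set (G → A)) (hS : S = windowSet D P)
    (E : Set G) (hDE : D ⊆ E) :
    S = windowSet E (resSet S E) := by
  subst hS
  ext x
  constructor
  · intro hx g
    refine ⟨bshift g x, fun h => ?_, rfl⟩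
    have := hx (h * g)
    simpa [bshift, mul_assoc] using this
  · intro hx
    intro g
    obtain ⟨y, hy, hyx⟩ := hx g
    have hyD : (fun d : ↥D => bshift 1 y d) ∈ P := hy 1
    have : (fun d : ↥D => bshift g x d) = fun d : ↥D => bshift 1 y d := by
      funext d
      have := congrFun hyx ⟨d.1, hDE d.2⟩
      simpa [bshift] using this.symm
    rw [this]
    exact hyD
end

section
/- Let G be a monoid, A and B sets, Σ ⊂ A^G and Γ ⊂ B^G subshifts, and let τ : Σ → B^G and σ : Γ → A^G be cellular automata admitting a common memory set M ⊂ G with 1_G ∈ M. Suppose Γ = τ(Σ), that σ ∘ τ is the identity map on Σ, and that Σ = Σ(A^G; M, Σ_M). Then Γ = Σ(B^G; M², Γ_{M²}), where M² = {gh : g, h ∈ M}; in particular, Γ is a subshift of finite type of B^G. -/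
open scoped Pointwise in
/-- Theorem 3.1, criterion for a subshift to be of finite type.
Let `Σ ⊆ A^G`, `Γ ⊆ B^G` be subshifts and `τ : Σ → B^G`, `σ : Γ → A^G` cellular automata
with a common finite memory set `M ∋ 1`. If `Γ = τ(Σ)`, `σ ∘ τ = id` on `Σ`, and
`Σ = Σ(A^G; M, Σ_M)`, then `Γ = Σ(B^G; M², Γ_{M²})`; in particular `Γ` is of finite type. -/
theorem criterion_finite_type {G A B : Type} [Monoid G]
    (S : Set (G → A)) (Γ : Set (G → B)) (hS : IsSubshift S) (hΓ : IsSubshift Γ)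
    (τ : (G → A) → (G → B)) (σ : (G → B) → (G → A))
    (M : Set G) (hM : M.Finite) (h1M : (1 : G) ∈ M)
    (hτ : IsCAWith S τ M) (hσ : IsCAWith Γ σ M)
    (hΓτ : Γ = τ '' S) (hστ : ∀ x ∈ S, σ (τ x) = x)
    (hSsft : S = windowSet M (resSet S M)) :
    Γ = windowSet (M * M) (resSet Γ (M * M)) ∧ IsSFT Γ := by
  obtain ⟨μ, hμ⟩ := hτ
  obtain ⟨ν, hν⟩ := hσ
  have key : Γ = windowSet (M * M) (resSet Γ (M * M)) := by
    apply Set.Subset.antisymm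
    · intro y hy g
      exact ⟨bshift g y, hΓ g y hy, rfl⟩
    · intro y hy
      set x : G → A := fun g => ν (fun m : ↥M => y ((m : G) * g)) with hxdef
      have main : ∀ g : G, ∃ w ∈ S, (∀ m ∈ M, x (m * g) = w m) ∧
          (∀ p ∈ M * M, τ w p = y (p * g)) := by
        intro g
        obtain ⟨z, hz, hzr⟩ := hy g
        have hzy : ∀ p ∈ M * M, z p = y (p * g) := by
          intro p hp
          exact congrFun hzr ⟨p, hp⟩
        have hz' : z ∈ τ '' S := hΓτ ▸ hz
        obtain ⟨w, hw, hwz⟩ := hz'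
        refine ⟨w, hw, ?_, ?_⟩
        · intro m hm
          have hσz : σ z m = ν (fun m' : ↥M => z ((m' : G) * m)) := hν z hz m
          have h1 : x (m * g) = σ z m := by
            rw [hσz]
            show ν (fun m' : ↥M => y ((m' : G) * (m * g))) = _
            congr 1
            funext m'
            rw [hzy ((m' : G) * m) (Set.mul_mem_mul m'.2 hm), mul_assoc]
          have h2 : σ z = w := by rw [← hwz]; exact hστ w hw
          rw [h1, h2]
        · intro p hp
          rw [hwz]; exact hzy p hp
      have hxS : x ∈ S := by
        rw [hSsft]
        intro g
        obtain ⟨w, hw, h1, _⟩ := main g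
        refine ⟨w, hw, ?_⟩
        funext m
        exact (h1 m m.2).symm
      have hτxy : τ x = y := by
        funext g
        obtain ⟨w, hw, h1, h2⟩ := main g
        have e1 : τ x g = μ (fun m : ↥M => x ((m : G) * g)) := hμ x hxS g
        have e2 : τ w 1 = μ (fun m : ↥M => w ((m : G) * 1)) := hμ w hw 1
        have e3 : τ x g = τ w 1 := by
          rw [e1, e2]
          congr 1
          funext m
          rw [mul_one, h1 m m.2]
        rw [e3, h2 1 (by simpa using Set.mul_mem_mul h1M h1M), one_mul]
      rw [hΓτ]
      exact ⟨x, hxS, hτxy⟩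
  exact ⟨key, M * M, hM.mul hM, resSet Γ (M * M), key⟩
end

section
/- Let G be a countable monoid, let R be a ring, and let A, B be Artinian R-modules. Let Σ ⊂ A^G be a subshift that is an R-submodule of A^G and is closed in the prodiscrete topology (e.g. Σ = A^G). Suppose τ : Σ → B^G is an injective cellular automaton that is also a homomorphism of R-modules. Then for every subshift Δ ⊂ A^G contained in Σ: the image τ(Δ) ⊂ B^G is a subshift of finite type if and only if Δ is a subshift of finite type, and τ(Δ) is a sofic subshift if and only if Δ is a sofic subshift. -/
namespace CAaux
open Pointwise

variable {G A B C : Type}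

/-- A globally-defined map of cellular-automaton form. -/
def caMap [Mul G] (M : Set G) (μ : (↥M → A) → B) : (G → A) → (G → B) :=
  fun x g => μ (fun m : ↥M => x (↑m * g))

lemma isCAWith_caMap [Monoid G] (W : Set (G → A)) (M : Set G) (μ : (↥M → A) → B) :
    IsCAWith W (caMap M μ) M :=
  ⟨μ, fun _ _ _ => rfl⟩

lemma isCA_comp [Monoid G] {W : Set (G → C)} {γ : (G → C) → (G → A)} (hγ : IsCA W γ)
    {N : Set G} (hN : N.Finite) (ν : (↥N → A) → B) :
    IsCA W (fun w => caMap N ν (γ w)) := by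
  obtain ⟨K, hK, μγ, hμγ⟩ := hγ
  refine ⟨K * N, hK.mul hN,
    (fun p : (↥(K * N) → C) =>
      ν (fun n : ↥N => μγ (fun k : ↥K => p ⟨↑k * ↑n, Set.mul_mem_mul k.2 n.2⟩))), ?_⟩
  intro w hw g
  show ν (fun n : ↥N => γ w (↑n * g)) = _
  congr 1
  funext n
  rw [hμγ w hw (↑n * g)]
  congr 1
  funext k
  show w (↑k * (↑n * g)) = w (↑k * ↑n * g)
  rw [mul_assoc]

lemma sft_transfer [Monoid G] {M N D : Set G} (hM : M.Finite) (hN : N.Finite) (hD : D.Finite)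
    (μ : (↥M → A) → B) (ν : (↥N → B) → A) (P : Set (↥D → A))
    (hinv : ∀ x ∈ windowSet D P, caMap N ν (caMap M μ x) = x) :
    IsSFT (caMap M μ '' windowSet D P) := by
  classical
  set D' : Set G := N * D ∪ (N * M ∪ {1}) with hD'
  have hmemND : ∀ (n : ↥N) (d : ↥D), (↑n * ↑d : G) ∈ D' :=
    fun n d => Or.inl (Set.mul_mem_mul n.2 d.2)
  have hmemNM : ∀ (n : ↥N) (m : ↥M), (↑n * ↑m : G) ∈ D' :=
    fun n m => Or.inr (Or.inl (Set.mul_mem_mul n.2 m.2))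
  have hmem1 : (1 : G) ∈ D' := Or.inr (Or.inr rfl)
  refine ⟨D', by rw [hD']; exact (hN.mul hD).union ((hN.mul hM).union (Set.finite_singleton 1)), ?_⟩
  refine ⟨{ p : ↥D' → B |
      (fun d : ↥D => ν (fun n : ↥N => p ⟨↑n * ↑d, hmemND n d⟩)) ∈ P ∧
      μ (fun m : ↥M => ν (fun n : ↥N => p ⟨↑n * ↑m, hmemNM n m⟩)) = p ⟨1, hmem1⟩ }, ?_⟩
  have key1 : ∀ (y : G → B) (g : G) (d : ↥D),
      caMap N ν y (↑d * g) = ν (fun n : ↥N => y (↑n * ↑d * g)) :=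
    fun y g d => congrArg ν (funext fun n => congrArg y (mul_assoc _ _ _).symm)
  have key2 : ∀ (y : G → B) (g : G) (m : ↥M),
      caMap N ν y (↑m * g) = ν (fun n : ↥N => y (↑n * ↑m * g)) :=
    fun y g m => congrArg ν (funext fun n => congrArg y (mul_assoc _ _ _).symm)
  ext y
  constructor
  · rintro ⟨x, hx, rfl⟩
    intro g
    constructor
    · have e : (fun d : ↥D => ν (fun n : ↥N => caMap M μ x (↑n * ↑d * g)))
          = fun d : ↥D => x (↑d * g) := by
        funext d
        rw [← key1 (caMap M μ x) g d]
        show caMap N ν (caMap M μ x) (↑d * g) = x (↑d * g)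
        rw [hinv x hx]
      exact e ▸ hx g
    · show μ (fun m : ↥M => ν (fun n : ↥N => caMap M μ x (↑n * ↑m * g)))
          = caMap M μ x (1 * g)
      have e : (fun m : ↥M => ν (fun n : ↥N => caMap M μ x (↑n * ↑m * g)))
          = fun m : ↥M => x (↑m * g) := by
        funext m
        rw [← key2 (caMap M μ x) g m]
        show caMap N ν (caMap M μ x) (↑m * g) = x (↑m * g)
        rw [hinv x hx]
      rw [e, one_mul]
      rfl
  · intro hy
    refine ⟨caMap N ν y, ?_, ?_⟩
    · intro g
      have e : (fun d : ↥D => bshift g (caMap N ν y) ↑d)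
          = fun d : ↥D => ν (fun n : ↥N => y (↑n * ↑d * g)) :=
        funext fun d => key1 y g d
      rw [e]
      exact (hy g).1
    · funext g
      have h2 := (hy g).2
      show μ (fun m : ↥M => caMap N ν y (↑m * g)) = y g
      have e : (fun m : ↥M => caMap N ν y (↑m * g))
          = fun m : ↥M => ν (fun n : ↥N => y (↑n * ↑m * g)) :=
        funext fun m => key2 y g m
      rw [e]
      calc μ (fun m : ↥M => ν (fun n : ↥N => y (↑n * ↑m * g))) = y (1 * g) := h2
        _ = y g := by rw [one_mul]

end CAaux

namespace CAaux
open Pointwise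

variable {R : Type}

lemma exists_inverse [Monoid G] [Countable G] [Ring R] [AddCommGroup A] [Module R A]
    [IsArtinian R A] [AddCommGroup B] [Module R B]
    (S : Submodule R (G → A)) (hsub : IsSubshift (S : Set (G → A)))
    (hclosed : @IsClosed (G → A) (@Pi.topologicalSpace G (fun _ => A) (fun _ => ⊥))
      (S : Set (G → A)))
    (τ : (G → A) → (G → B))
    {M : Set G} (hMfin : M.Finite) (μ : (↥M → A) → B)
    (hμ : ∀ x ∈ (S : Set (G → A)), ∀ g : G, τ x g = μ (fun m : ↥M => x (↑m * g)))
    (hinj : Set.InjOn τ (S : Set (G → A)))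
    (hadd : ∀ x ∈ S, ∀ y ∈ S, τ (x + y) = τ x + τ y)
    (hsmul : ∀ r : R, ∀ x ∈ S, τ (r • x) = r • τ x) :
    ∃ N : Set G, N.Finite ∧ ∃ ν : (↥N → B) → A,
      ∀ x ∈ (S : Set (G → A)), ∀ g : G, ν (fun n : ↥N => τ x (↑n * g)) = x g := by
  classical
  -- basic algebraic facts about τ
  have hτ0 : τ 0 = 0 := by
    have h := hadd 0 S.zero_mem 0 S.zero_mem
    rw [add_zero] at h
    have h2 : τ 0 + 0 = τ 0 + τ 0 := by rw [add_zero]; exact h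
    exact (add_left_cancel h2).symm
  have hτneg : ∀ x ∈ S, τ (-x) = -τ x := by
    intro x hx
    have h := hsmul (-1 : R) x hx
    rwa [neg_one_smul, neg_one_smul] at h
  have hτsub : ∀ x ∈ S, ∀ y ∈ S, τ (x - y) = τ x - τ y := by
    intro x hx y hy
    rw [sub_eq_add_neg, hadd x hx (-y) (S.neg_mem hy), hτneg y hy, sub_eq_add_neg]
  -- shift equivariance
  have hτshift : ∀ x ∈ (S : Set (G → A)), ∀ g h : G, τ (bshift g x) h = τ x (h * g) := by
    intro x hx g h
    rw [hμ (bshift g x) (hsub g x hx) h, hμ x hx (h * g)]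
    exact congrArg μ (funext fun m => congrArg x (mul_assoc _ _ _))
  -- an exhaustion of G by finite sets
  obtain ⟨e, he⟩ := exists_surjective_nat G
  set E : ℕ → Set G := fun n => insert 1 (e '' Set.Iic n) with hE
  have hEfin : ∀ n, (E n).Finite := fun n => ((Set.finite_Iic n).image e).insert 1
  have hEmono : Monotone E := fun n m h =>
    Set.insert_subset_insert (Set.image_mono (f := e) (Set.Iic_subset_Iic.2 h))
  have h1E : ∀ n, (1 : G) ∈ E n := fun n => Set.mem_insert _ _
  have hidx : ∀ g : G, ∃ n, g ∈ E n := by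
    intro g
    obtain ⟨i, rfl⟩ := he g
    exact ⟨i, Set.mem_insert_of_mem _ ⟨i, Set.mem_Iic.2 le_rfl, rfl⟩⟩
  have hEcover : ∀ F : Set G, F.Finite → ∃ n, F ⊆ E n := by
    intro F hF
    choose f hf using hidx
    refine ⟨hF.toFinset.sup f, fun g hg => ?_⟩
    exact hEmono (Finset.le_sup (hF.mem_toFinset.2 hg)) (hf g)
  -- the submodules K m
  have hτaddpt : ∀ x ∈ S, ∀ y ∈ S, ∀ g : G, τ (x + y) g = τ x g + τ y g :=
    fun x hx y hy g => by rw [hadd x hx y hy]; rfl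
  set K : ℕ → Submodule R (G → A) := fun m =>
    { carrier := {x | x ∈ S ∧ ∀ g ∈ E m, τ x g = 0}
      add_mem' := by
        rintro x y ⟨hx, hx0⟩ ⟨hy, hy0⟩
        refine ⟨S.add_mem hx hy, fun g hg => ?_⟩
        rw [hτaddpt x hx y hy g, hx0 g hg, hy0 g hg, add_zero]
      zero_mem' := ⟨S.zero_mem, fun g _ => by rw [hτ0]; rfl⟩
      smul_mem' := by
        rintro r x ⟨hx, hx0⟩
        refine ⟨S.smul_mem r hx, fun g hg => ?_⟩
        have : τ (r • x) g = r • τ x g := by rw [hsmul r x hx]; rfl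
        rw [this, hx0 g hg, smul_zero] } with hK
  have hKmem : ∀ m (x : G → A), x ∈ K m ↔ x ∈ S ∧ ∀ g ∈ E m, τ x g = 0 := fun m x => Iff.rfl
  have hKanti : ∀ {m m'}, m ≤ m' → K m' ≤ K m := by
    intro m m' h x hx
    exact ⟨hx.1, fun g hg => hx.2 g (hEmono h hg)⟩
  -- the restriction maps
  set π : (F : Set G) → (G → A) →ₗ[R] (↥F → A) :=
    fun F => LinearMap.funLeft R A Subtype.val with hπ
  -- the chain L m
  set L : ℕ → Submodule R A := fun m => (K m).map (LinearMap.proj (1 : G)) with hL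
  have hLanti : ∀ {m m'}, m ≤ m' → L m' ≤ L m := fun h => Submodule.map_mono (hKanti h)
  obtain ⟨n₀, hn₀⟩ := IsArtinian.monotone_stabilizes
    (⟨fun n => OrderDual.toDual (L n), fun a b h => hLanti h⟩ : ℕ →o (Submodule R A)ᵒᵈ)
  -- the chains W n m and their stabilization
  set Wc : (n : ℕ) → ℕ → Submodule R (↥(E n) → A) := fun n m => (K m).map (π (E n)) with hWc
  have hWanti : ∀ n, ∀ {m m'}, m ≤ m' → Wc n m' ≤ Wc n m :=
    fun n {_ _} h => Submodule.map_mono (hKanti h)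
  have hstab : ∀ n, ∃ s, n ≤ s ∧ ∀ m, s ≤ m → Wc n m = Wc n s := by
    intro n
    haveI : Finite ↥(E n) := (hEfin n).to_subtype
    obtain ⟨k, hk⟩ := IsArtinian.monotone_stabilizes
      (⟨fun m => OrderDual.toDual (Wc n m), fun a b h => hWanti n h⟩ :
        ℕ →o (Submodule R (↥(E n) → A))ᵒᵈ)
    refine ⟨max n k, le_max_left _ _, fun m hm => ?_⟩
    have h1 := hk m (le_trans (le_max_right n k) hm)
    have h2 := hk (max n k) (le_max_right n k)
    exact (OrderDual.toDual.injective (h1.symm.trans h2) : _)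
  choose s hs hsut using hstab
  -- the restriction maps between successive stages
  set ρ : (n : ℕ) → (↥(E (n + 1)) → A) →ₗ[R] (↥(E n) → A) :=
    fun n => LinearMap.funLeft R A (Set.inclusion (hEmono (Nat.le_succ n))) with hρ
  -- surjectivity of transition maps between stabilized images
  have hsurj : ∀ n, ∀ w ∈ Wc n (s n), ∃ w' ∈ Wc (n + 1) (s (n + 1)), ρ n w' = w := by
    intro n w hw
    set m := max (s n) (s (n + 1)) with hm
    rw [← hsut n m (le_max_left _ _)] at hw
    obtain ⟨x, hx, rfl⟩ := hw
    refine ⟨π (E (n + 1)) x, ?_, rfl⟩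
    rw [← hsut (n + 1) m (le_max_right _ _)]
    exact ⟨x, hx, rfl⟩
  -- the key finiteness property: vanishing of τ x on E n₀ forces x 1 = 0
  have hkey : ∀ x ∈ S, (∀ g ∈ E n₀, τ x g = 0) → x 1 = 0 := by
    have hL0 : ∀ a ∈ L n₀, a = 0 := by
      intro a ha
      have haL : ∀ m, a ∈ L m := by
        intro m
        rcases le_total m n₀ with h | h
        · exact hLanti h ha
        · have := hn₀ m h
          have hLeq : L n₀ = L m := OrderDual.toDual.injective this
          exact hLeq ▸ ha
      -- initial element of the chain
      have h0 : ∃ w : ↥(E 0) → A, w ∈ Wc 0 (s 0) ∧ w ⟨1, h1E 0⟩ = a := by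
        obtain ⟨x, hx, hx1⟩ := haL (s 0)
        exact ⟨π (E 0) x, ⟨x, hx, rfl⟩, hx1⟩
      -- the inverse-limit chain
      set cw : ∀ n : ℕ, {w : ↥(E n) → A // w ∈ Wc n (s n)} := fun n => Nat.rec
        (⟨h0.choose, h0.choose_spec.1⟩ : {w : ↥(E 0) → A // w ∈ Wc 0 (s 0)})
        (fun k ih => ⟨(hsurj k ih.1 ih.2).choose, (hsurj k ih.1 ih.2).choose_spec.1⟩) n
        with hcw
      have hcomp : ∀ n, ρ n (cw (n + 1)).1 = (cw n).1 :=
        fun n => (hsurj n (cw n).1 (cw n).2).choose_spec.2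
      have hcomp' : ∀ n g (hg : g ∈ E n), ∀ m (h : n ≤ m),
          (cw m).1 ⟨g, hEmono h hg⟩ = (cw n).1 ⟨g, hg⟩ := by
        intro n g hg m h
        induction m, h using Nat.le_induction with
        | base => rfl
        | succ m h ih =>
          rw [← ih, ← hcomp m]
          rfl
      -- the limit configuration
      set x : G → A := fun g => (cw (hidx g).choose).1 ⟨g, (hidx g).choose_spec⟩ with hx
      have hxE : ∀ n g (hg : g ∈ E n), x g = (cw n).1 ⟨g, hg⟩ := by
        intro n g hg
        have h1 := hcomp' (hidx g).choose g (hidx g).choose_spec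
          (max (hidx g).choose n) (le_max_left _ _)
        have h2 := hcomp' n g hg (max (hidx g).choose n) (le_max_right _ _)
        show (cw (hidx g).choose).1 ⟨g, (hidx g).choose_spec⟩ = (cw n).1 ⟨g, hg⟩
        rw [← h1, ← h2]
      -- realizations of each stage
      have hreal : ∀ n, ∃ z, z ∈ K (s n) ∧ ∀ g (hg : g ∈ E n), z g = x g := by
        intro n
        obtain ⟨z, hz, hzr⟩ := (cw n).2
        refine ⟨z, hz, fun g hg => ?_⟩
        have : π (E n) z ⟨g, hg⟩ = (cw n).1 ⟨g, hg⟩ := by rw [hzr]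
        rw [hxE n g hg, ← this]
        rfl
      choose z hzK hzx using hreal
      -- x belongs to S by closedness
      letI : TopologicalSpace A := ⊥
      haveI : DiscreteTopology A := ⟨rfl⟩
      have hxS : x ∈ (S : Set (G → A)) := by
        refine hclosed.mem_of_tendsto (f := fun n => z n) (b := Filter.atTop) ?_ ?_
        · rw [tendsto_pi_nhds]
          intro g
          rw [nhds_discrete, Filter.tendsto_pure]
          refine Filter.eventually_atTop.2 ⟨(hidx g).choose, fun n hn => ?_⟩
          exact hzx n g (hEmono hn (hidx g).choose_spec)
        · exact Filter.Eventually.of_forall (fun n => (hzK n).1)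
      -- τ x = 0
      have hτx : ∀ g : G, τ x g = 0 := by
        intro g
        obtain ⟨n, hn⟩ := hEcover (insert g (M * {g}))
          ((hMfin.mul (Set.finite_singleton g)).insert g)
        have hgE : g ∈ E n := hn (Set.mem_insert _ _)
        have hxz : ∀ m : ↥M, x (↑m * g) = z n (↑m * g) := by
          intro m
          exact (hzx n (↑m * g) (hn (Set.mem_insert_of_mem _
            (Set.mul_mem_mul m.2 (Set.mem_singleton g))))).symm
        rw [hμ x hxS g]
        have : (fun m : ↥M => x (↑m * g)) = fun m : ↥M => z n (↑m * g) := funext hxz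
        rw [this, ← hμ (z n) (hzK n).1 g]
        exact (hzK n).2 g (hEmono (hs n) hgE)
      -- conclude a = 0 by injectivity
      have hx0 : x = 0 := hinj hxS S.zero_mem (by rw [hτ0]; exact funext hτx)
      have hx1 : x 1 = a := by
        have h1 : x 1 = (cw 0).1 ⟨1, h1E 0⟩ := hxE 0 1 (h1E 0)
        rw [h1]
        exact h0.choose_spec.2
      rw [← hx1, hx0]
      rfl
    intro x hx h0
    exact hL0 (x 1) ⟨x, ⟨hx, h0⟩, rfl⟩
  -- define the inverse local map
  refine ⟨E n₀, hEfin n₀, ?_⟩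
  set N : Set G := E n₀ with hN
  refine ⟨fun b : ↥N → B =>
    if h : ∃ zz : G → A, zz ∈ (S : Set (G → A)) ∧ (fun n : ↥N => τ zz ↑n) = b
    then h.choose 1 else 0, ?_⟩
  intro x hx g
  have hwit : ∃ zz : G → A, zz ∈ (S : Set (G → A)) ∧
      (fun n : ↥N => τ zz ↑n) = fun n : ↥N => τ x (↑n * g) :=
    ⟨bshift g x, hsub g x hx, funext fun n => hτshift x hx g ↑n⟩
  beta_reduce
  rw [dif_pos hwit]
  set w := hwit.choose with hw
  obtain ⟨hwS, hwτ⟩ := hwit.choose_spec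
  have hd : w - bshift g x ∈ (S : Set (G → A)) :=
    S.sub_mem hwS (hsub g x hx)
  have hdτ : ∀ h ∈ E n₀, τ (w - bshift g x) h = 0 := by
    intro h hh
    rw [hτsub w hwS (bshift g x) (hsub g x hx)]
    have h1 : τ w h = τ x (h * g) := congrFun hwτ (⟨h, hh⟩ : ↥N)
    have h2 : τ (bshift g x) h = τ x (h * g) := hτshift x hx g h
    show τ w h - τ (bshift g x) h = 0
    rw [h1, h2, sub_self]
  have := hkey (w - bshift g x) hd hdτ
  have h1 : w 1 - bshift g x 1 = 0 := this
  have h2 : w 1 = x (1 * g) := by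
    have := sub_eq_zero.mp h1
    exact this
  rw [← hw] at *
  rw [h2, one_mul]


theorem main {G R A B : Type} [Monoid G] [Countable G]
    [Ring R] [AddCommGroup A] [Module R A] [IsArtinian R A]
    [AddCommGroup B] [Module R B] [IsArtinian R B]
    (S : Submodule R (G → A)) (hsub : IsSubshift (S : Set (G → A)))
    (hclosed : @IsClosed (G → A) (@Pi.topologicalSpace G (fun _ => A) (fun _ => ⊥))
      (S : Set (G → A)))
    (τ : (G → A) → (G → B))
    (hca : IsCA (S : Set (G → A)) τ)
    (hinj : Set.InjOn τ (S : Set (G → A)))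
    (hadd : ∀ x ∈ S, ∀ y ∈ S, τ (x + y) = τ x + τ y)
    (hsmul : ∀ r : R, ∀ x ∈ S, τ (r • x) = r • τ x)
    (Δ : Set (G → A)) (hΔ : IsSubshift Δ) (hΔS : Δ ⊆ (S : Set (G → A))) :
    (IsSFT (τ '' Δ) ↔ IsSFT Δ) ∧ (IsSofic (τ '' Δ) ↔ IsSofic Δ) := by
  obtain ⟨M, hMfin, μ, hμ⟩ := hca
  have hμ' : ∀ x ∈ (S : Set (G → A)), ∀ g : G, τ x g = μ (fun m : ↥M => x (↑m * g)) :=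
    fun x hx g => hμ x hx g
  obtain ⟨N, hNfin, ν, hν⟩ :=
    exists_inverse S hsub hclosed τ hMfin μ hμ' hinj hadd hsmul
  -- T is the global CA-form map agreeing with τ on S, Sg its inverse
  have hT : ∀ x ∈ (S : Set (G → A)), caMap M μ x = τ x :=
    fun x hx => funext fun g => (hμ' x hx g).symm
  have hST : ∀ x ∈ (S : Set (G → A)), caMap N ν (caMap M μ x) = x := by
    intro x hx
    funext g
    show ν (fun n : ↥N => caMap M μ x (↑n * g)) = x g
    rw [hT x hx]
    exact hν x hx g
  have himg : τ '' Δ = caMap M μ '' Δ :=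
    Set.image_congr fun x hx => (hT x (hΔS hx)).symm
  have hSτ : ∀ x ∈ Δ, caMap N ν (τ x) = x := by
    intro x hx
    rw [← hT x (hΔS hx)]
    exact hST x (hΔS hx)
  have hback : caMap N ν '' (τ '' Δ) = Δ := by
    rw [Set.image_image]
    calc (fun x => caMap N ν (τ x)) '' Δ = id '' Δ := Set.image_congr fun x hx => hSτ x hx
      _ = Δ := Set.image_id Δ
  constructor
  · constructor
    · -- τ '' Δ SFT → Δ SFT
      rintro ⟨D, hDfin, P, hDP⟩
      have hinv : ∀ y ∈ windowSet D P, caMap M μ (caMap N ν y) = y := by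
        intro y hy
        rw [← hDP] at hy
        obtain ⟨x, hx, rfl⟩ := hy
        rw [hSτ x hx, hT x (hΔS hx)]
      have := sft_transfer hNfin hMfin hDfin ν μ P hinv
      rw [← hDP, hback] at this
      exact this
    · -- Δ SFT → τ '' Δ SFT
      rintro ⟨D, hDfin, P, hDP⟩
      have hinv : ∀ x ∈ windowSet D P, caMap N ν (caMap M μ x) = x := by
        intro x hx
        rw [← hDP] at hx
        exact hST x (hΔS hx)
      have := sft_transfer hMfin hNfin hDfin μ ν P hinv
      rw [← hDP] at this
      rw [himg]
      exact this
  · constructor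
    · -- τ '' Δ sofic → Δ sofic
      rintro ⟨C, W, γ, hWsft, hγ, hτΔ⟩
      refine ⟨C, W, fun w => caMap N ν (γ w), hWsft, isCA_comp hγ hNfin ν, ?_⟩
      calc Δ = caMap N ν '' (τ '' Δ) := hback.symm
        _ = caMap N ν '' (γ '' W) := by rw [hτΔ]
        _ = (fun w => caMap N ν (γ w)) '' W := Set.image_image _ _ _
    · -- Δ sofic → τ '' Δ sofic
      rintro ⟨C, W, γ, hWsft, hγ, hΔW⟩
      refine ⟨C, W, fun w => caMap M μ (γ w), hWsft, isCA_comp hγ hMfin μ, ?_⟩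
      calc τ '' Δ = caMap M μ '' Δ := himg
        _ = caMap M μ '' (γ '' W) := by rw [hΔW]
        _ = (fun w => caMap M μ (γ w)) '' W := Set.image_image _ _ _

end CAaux


/-- Theorem B. Let `G` be a countable monoid, `R` a ring, and `A`, `B`
Artinian `R`-modules. Let `Σ ⊆ A^G` be a subshift which is an `R`-submodule of `A^G` and is
closed in the prodiscrete topology, and let `τ : Σ → B^G` be an injective cellular automaton
which is also a homomorphism of `R`-modules. Then for every subshift `Δ ⊆ Σ`:
`τ(Δ)` is of finite type iff `Δ` is, and `τ(Δ)` is sofic iff `Δ` is. -/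
theorem image_subshift_artinian_module {G R A B : Type} [Monoid G] [Countable G]
    [Ring R] [AddCommGroup A] [Module R A] [IsArtinian R A]
    [AddCommGroup B] [Module R B] [IsArtinian R B]
    (S : Submodule R (G → A)) (hsub : IsSubshift (S : Set (G → A)))
    (hclosed : @IsClosed (G → A) (@Pi.topologicalSpace G (fun _ => A) (fun _ => ⊥))
      (S : Set (G → A)))
    (τ : (G → A) → (G → B))
    (hca : IsCA (S : Set (G → A)) τ)
    (hinj : Set.InjOn τ (S : Set (G → A)))
    (hadd : ∀ x ∈ S, ∀ y ∈ S, τ (x + y) = τ x + τ y)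
    (hsmul : ∀ r : R, ∀ x ∈ S, τ (r • x) = r • τ x)
    (Δ : Set (G → A)) (hΔ : IsSubshift Δ) (hΔS : Δ ⊆ (S : Set (G → A))) :
    (IsSFT (τ '' Δ) ↔ IsSFT Δ) ∧ (IsSofic (τ '' Δ) ↔ IsSofic Δ) :=
  CAaux.main S hsub hclosed τ hca hinj hadd hsmul Δ hΔ hΔS
end

section
/- Let G be a countable monoid, let R be a ring, and let A be an Artinian R-module. Let Σ ⊂ A^G be a subshift that is an R-submodule of A^G and is closed in the prodiscrete topology. Let τ : Σ → A^G be an injective cellular automaton that is also a homomorphism of R-modules. Then there exists a finite subset N ⊂ G with the property that for every x ∈ τ(Σ), the element τ^{-1}(x)(1_G) ∈ A depends only on the restriction x|_N; that is, for all x, y ∈ Σ, if τ(x)|_N = τ(y)|_N then x(1_G) = y(1_G). -/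
/-- Lemma 7.1, Artinian-module instance. Let `G` be a countable monoid and
`A` an Artinian `R`-module. Let `Σ ⊆ A^G` be a subshift submodule which is closed in the
prodiscrete topology, and let `τ : Σ → A^G` be an injective cellular automaton which is also
an `R`-module homomorphism. Then there is a finite `N ⊆ G` such that for every `x ∈ τ(Σ)`,
the value `τ⁻¹(x)(1_G)` depends only on `x|_N`: for all `x, y ∈ Σ`, if `τ(x)|_N = τ(y)|_N`
then `x(1_G) = y(1_G)`. -/
theorem left_inverse_window_artinian {G R A : Type} [Monoid G] [Countable G]
    [Ring R] [AddCommGroup A] [Module R A] [IsArtinian R A]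
    (S : Submodule R (G → A)) (hsub : IsSubshift (S : Set (G → A)))
    (hclosed : @IsClosed (G → A) (@Pi.topologicalSpace G (fun _ => A) (fun _ => ⊥))
      (S : Set (G → A)))
    (τ : (G → A) → (G → A))
    (hca : IsCA (S : Set (G → A)) τ)
    (hinj : Set.InjOn τ (S : Set (G → A)))
    (hadd : ∀ x ∈ S, ∀ y ∈ S, τ (x + y) = τ x + τ y)
    (hsmul : ∀ r : R, ∀ x ∈ S, τ (r • x) = r • τ x) :
    ∃ N : Set G, N.Finite ∧
      ∀ x ∈ S, ∀ y ∈ S, (∀ n ∈ N, τ x n = τ y n) → x 1 = y 1 := by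
    classical
  letI : TopologicalSpace A := ⊥
  have hclosed' : IsClosed (S : Set (G → A)) := hclosed
  obtain ⟨M, hMfin, μ, hμ⟩ := hca
  -- τ sends 0 to 0 and respects subtraction on S
  have h0S : (0 : G → A) ∈ S := S.zero_mem
  have hτ0 : τ 0 = 0 := by
    have h := hadd 0 h0S 0 h0S
    rw [add_zero] at h
    exact (left_eq_add.mp h)
  have hτsub : ∀ x ∈ S, ∀ y ∈ S, τ (x - y) = τ x - τ y := by
    intro x hx y hy
    have h1 : x - y ∈ S := S.sub_mem hx hy
    have h := hadd _ h1 _ hy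
    rw [sub_add_cancel] at h
    exact eq_sub_of_add_eq h.symm
  -- an exhaustion of G by finite sets
  obtain ⟨f, hf⟩ := exists_surjective_nat G
  set N : ℕ → Set G := fun k => f '' {j | j ≤ k} with hN
  have hNfin : ∀ k, (N k).Finite := fun k => (Set.finite_Iic k).image f
  have hNmono : ∀ {k l}, k ≤ l → N k ⊆ N l := by
    rintro k l hkl g ⟨j, hj, rfl⟩
    exact ⟨j, le_trans hj hkl, rfl⟩
  have hNall : ∀ g : G, ∃ k, g ∈ N k := by
    intro g
    obtain ⟨j, rfl⟩ := hf g
    exact ⟨j, Set.mem_image_of_mem f (show j ≤ j from le_rfl : j ∈ {j' | j' ≤ j})⟩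
  choose cidx hcidx using hNall
  have hNfinset : ∀ I : Finset G, ∃ k, (I : Set G) ⊆ N k := by
    intro I
    refine ⟨I.sup cidx, fun g hg => hNmono (Finset.le_sup hg) (hcidx g)⟩
  -- the submodules K i, K' i and V i
  set K : ℕ → Submodule R (G → A) := fun i =>
    { carrier := {x | x ∈ S ∧ ∀ n ∈ N i, τ x n = 0}
      add_mem' := by
        rintro x y ⟨hxS, hx⟩ ⟨hyS, hy⟩
        refine ⟨S.add_mem hxS hyS, fun n hn => ?_⟩
        rw [hadd x hxS y hyS]
        simp [hx n hn, hy n hn]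
      zero_mem' := ⟨h0S, fun n _ => by rw [hτ0]; rfl⟩
      smul_mem' := by
        rintro r x ⟨hxS, hx⟩
        refine ⟨S.smul_mem r hxS, fun n hn => ?_⟩
        rw [hsmul r x hxS]
        simp [hx n hn] } with hK
  have hKmem : ∀ i x, x ∈ K i ↔ x ∈ S ∧ ∀ n ∈ N i, τ x n = 0 := fun i x => Iff.rfl
  have hKanti : ∀ {i j}, i ≤ j → K j ≤ K i := by
    intro i j hij x hx
    exact ⟨hx.1, fun n hn => hx.2 n (hNmono hij hn)⟩
  set K' : ℕ → Submodule R (G → A) := fun i =>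
    (K i) ⊓ (LinearMap.ker (LinearMap.proj (R := R) (φ := fun _ : G => A) 1)) with hK'
  have hK'mem : ∀ i x, x ∈ K' i ↔ x ∈ K i ∧ x 1 = 0 := by
    intro i x
    simp [hK', Submodule.mem_inf, LinearMap.mem_ker]
  have hK'anti : ∀ {i j}, i ≤ j → K' j ≤ K' i := by
    intro i j hij
    exact inf_le_inf_right _ (hKanti hij)
  set ev1 : (G → A) →ₗ[R] A := LinearMap.proj (R := R) (φ := fun _ : G => A) 1 with hev1
  set V : ℕ → Submodule R A := fun i => (K i).map ev1 with hV
  have hVanti : ∀ {i j}, i ≤ j → V j ≤ V i := fun hij =>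
    Submodule.map_mono (hKanti hij)
  -- stabilization of V
  obtain ⟨i₀, hi₀⟩ := IsArtinian.monotone_stabilizes
    (⟨fun i => OrderDual.toDual (V i), fun i j hij => hVanti hij⟩ : ℕ →o (Submodule R A)ᵒᵈ)
  -- stabilization of the projections of K'
  set πm : ∀ k : ℕ, (G → A) →ₗ[R] (↥(N k) → A) := fun k =>
    LinearMap.funLeft R A (Subtype.val : ↥(N k) → G) with hπm
  have hψ : ∀ k : ℕ, ∃ n : ℕ, ∀ m, n ≤ m →
      (K' m).map (πm k) = (K' n).map (πm k) := by
    intro k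
    haveI := (hNfin k).fintype
    obtain ⟨n, hn⟩ := IsArtinian.monotone_stabilizes
      (⟨fun i => OrderDual.toDual ((K' i).map (πm k)),
        fun i j hij => Submodule.map_mono (hK'anti hij)⟩ :
        ℕ →o (Submodule R (↥(N k) → A))ᵒᵈ)
    exact ⟨n, fun m hm => congrArg OrderDual.ofDual (hn m hm).symm⟩
  choose ψ hψspec using hψ
  -- a monotone φ with φ k ≥ ψ k and φ k ≥ k
  set φ : ℕ → ℕ := fun k => Nat.rec (ψ 0) (fun k ih => max (ψ (k+1)) (max (k+1) ih)) k with hφ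
  have hφψ : ∀ k, ψ k ≤ φ k := by
    intro k; cases k with
    | zero => exact le_rfl
    | succ k => exact le_max_left _ _
  have hφk : ∀ k, k ≤ φ k := by
    intro k; cases k with
    | zero => exact Nat.zero_le _
    | succ k => exact le_trans (le_max_left _ _) (le_max_right _ _)
  have hφsucc : ∀ k, φ k ≤ φ (k+1) := by
    intro k; exact le_trans (le_max_right _ _) (le_max_right _ _)
  -- πm stabilized at both φ k and any j ≥ φ k
  have hπstab : ∀ k j, φ k ≤ j → (K' (φ k)).map (πm k) = (K' j).map (πm k) := by
    intro k j hj
    rw [hψspec k (φ k) (hφψ k), hψspec k j (le_trans (hφψ k) hj)]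
  -- the key claim : every element of V i₀ is zero
  have key : ∀ a : A, a ∈ V i₀ → a = 0 := by
    intro a ha
    -- the affine sets C i are all nonempty
    set C : ℕ → Set (G → A) := fun i => {x | x ∈ K i ∧ x 1 = a} with hC
    have hCne : ∀ i, ∃ x, x ∈ C i := by
      intro i
      have hai : a ∈ V i := by
        rcases le_or_gt i i₀ with h | h
        · exact hVanti h ha
        · have := hi₀ i (le_of_lt h)
          have : V i₀ = V i := congrArg OrderDual.ofDual this
          exact this ▸ ha
      obtain ⟨x, hx, hx1⟩ := Submodule.mem_map.mp hai
      exact ⟨x, hx, hx1⟩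
    have hCanti : ∀ {i j}, i ≤ j → C j ⊆ C i := by
      intro i j hij x hx
      exact ⟨hKanti hij hx.1, hx.2⟩
    -- key coset step
    have hkey : ∀ k j, φ k ≤ j → ∀ z ∈ C (φ k), ∃ w ∈ C j, ∀ g ∈ N k, w g = z g := by
      intro k j hj z hz
      obtain ⟨w₀, hw₀⟩ := hCne j
      have hzw : z - w₀ ∈ K' (φ k) := by
        rw [hK'mem]
        refine ⟨⟨S.sub_mem hz.1.1 hw₀.1.1, fun n hn => ?_⟩, ?_⟩
        · rw [hτsub z hz.1.1 w₀ hw₀.1.1]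
          have h1 := hz.1.2 n hn
          have h2 := hw₀.1.2 n (hNmono hj hn)
          simp [h1, h2]
        · simp [hz.2, hw₀.2]
      have : πm k (z - w₀) ∈ (K' j).map (πm k) := by
        rw [← hπstab k j hj]
        exact Submodule.mem_map_of_mem hzw
      obtain ⟨u, hu, huπ⟩ := Submodule.mem_map.mp this
      rw [hK'mem] at hu
      refine ⟨w₀ + u, ⟨?_, ?_⟩, ?_⟩
      · refine ⟨S.add_mem hw₀.1.1 hu.1.1, fun n hn => ?_⟩
        rw [hadd _ hw₀.1.1 _ hu.1.1]
        simp [hw₀.1.2 n hn, hu.1.2 n hn]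
      · simp [hw₀.2, hu.2]
      · intro g hg
        have := congrFun huπ ⟨g, hg⟩
        simp only [hπm, LinearMap.funLeft_apply] at this
        have : u g = z g - w₀ g := this
        simp [Pi.add_apply, this]
    -- build the compatible sequence z
    have hkey' : ∀ k (z : G → A), z ∈ C (φ k) →
        ∃ w, w ∈ C (φ (k+1)) ∧ ∀ g ∈ N k, w g = z g := by
      intro k z hz
      obtain ⟨w, hw1, hw2⟩ := hkey k (φ (k+1)) (hφsucc k) z hz
      exact ⟨w, hw1, hw2⟩
    choose step hstep1 hstep2 using hkey'
    obtain ⟨z0, hz0⟩ := hCne (φ 0)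
    set T : ∀ k : ℕ, {x : G → A // x ∈ C (φ k)} := fun k =>
      Nat.rec ⟨z0, hz0⟩ (fun k ih => ⟨step k ih.1 ih.2, hstep1 k ih.1 ih.2⟩) k with hT
    set z : ℕ → G → A := fun k => (T k).1 with hz
    have hzC : ∀ k, z k ∈ C (φ k) := fun k => (T k).2
    have hzstep : ∀ k, ∀ g ∈ N k, z (k+1) g = z k g := by
      intro k
      exact hstep2 k (z k) (hzC k)
    have hzagree : ∀ k l, k ≤ l → ∀ g ∈ N k, z l g = z k g := by
      intro k l hkl
      induction l, hkl using Nat.le_induction with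
      | base => intro g _; rfl
      | succ l hkl ih =>
        intro g hg
        rw [hzstep l g (hNmono hkl hg)]
        exact ih g hg
    -- the limit configuration x
    set x : G → A := fun g => z (cidx g) g with hxdef
    have hx : ∀ k, ∀ g ∈ N k, x g = z k g := by
      intro k g hg
      have h1 : z (max k (cidx g)) g = z (cidx g) g :=
        hzagree (cidx g) _ (le_max_right _ _) g (hcidx g)
      have h2 : z (max k (cidx g)) g = z k g :=
        hzagree k _ (le_max_left _ _) g hg
      rw [hxdef]
      dsimp only
      rw [← h1, h2]
    -- x lies in S because S is closed
    have hxS : x ∈ S := by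
      by_contra hxn
      have hopen : IsOpen ((S : Set (G → A))ᶜ) := hclosed'.isOpen_compl
      rw [isOpen_pi_iff] at hopen
      obtain ⟨I, u, hu, hsubI⟩ := hopen x hxn
      obtain ⟨k, hkI⟩ := hNfinset I
      have hzk : z k ∈ (I : Set G).pi u := by
        intro g hg
        have : z k g = x g := (hx k g (hkI hg)).symm
        rw [this]
        exact (hu g hg).2
      exact (hsubI hzk) (hzC k).1.1
    -- x takes value a at 1
    have hx1 : x 1 = a := by
      rw [hx (cidx 1) 1 (hcidx 1)]
      exact (hzC (cidx 1)).2
    -- τ x vanishes everywhere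
    have hτx : τ x = 0 := by
      funext n
      obtain ⟨k, hkJ⟩ := hNfinset (insert n (hMfin.toFinset.image (fun m => m * n)))
      have hmem : ∀ m : ↥M, (↑m : G) * n ∈ N k := by
        intro m
        apply hkJ
        simp only [Finset.coe_insert, Set.mem_insert_iff, Finset.coe_image]
        right
        exact ⟨m, by simp [Set.Finite.mem_toFinset], rfl⟩
      have hxz : (fun m : ↥M => bshift n x m) = (fun m : ↥M => bshift n (z k) m) := by
        funext m
        show x ((m : G) * n) = z k ((m : G) * n)
        exact hx k _ (hmem m)
      have h1 : τ x n = τ (z k) n := by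
        rw [hμ x hxS n, hμ (z k) (hzC k).1.1 n, hxz]
      have hnk : n ∈ N (φ k) := hNmono (hφk k) (hkJ (by simp))
      rw [h1]
      exact (hzC k).1.2 n hnk
    -- injectivity forces x = 0, hence a = 0
    have : x = 0 := hinj hxS h0S (by rw [hτx, hτ0])
    rw [← hx1, this]
    rfl
  -- conclusion
  refine ⟨N i₀, hNfin i₀, ?_⟩
  intro x hx y hy hxy
  have hd : x - y ∈ K i₀ := by
    refine ⟨S.sub_mem hx hy, fun n hn => ?_⟩
    rw [hτsub x hx y hy]
    simp [hxy n hn]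
  have : (x - y) 1 ∈ V i₀ := Submodule.mem_map_of_mem hd
  have h0 : (x - y) 1 = 0 := key _ this
  have h1 : x 1 - y 1 = 0 := h0
  exact sub_eq_zero.mp h1
end

section
/- Let G be a countable monoid, let R be a ring, and let A be an Artinian R-module. Let Σ ⊂ A^G be a subshift that is an R-submodule of A^G and is closed in the prodiscrete topology. Let τ : Σ → A^G be an injective cellular automaton that is also a homomorphism of R-modules, and set Γ = τ(Σ). Then there exists a finite subset N ⊂ G such that for every finite subset E ⊂ G containing N there exists an R-linear map η_E : Γ_E → A (where Γ_E is an R-submodule of A^E) satisfying η_E(τ(x)|_E) = x(1_G) for all x ∈ Σ. -/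
open Pointwise in
/-- Key lemma: there is a finite window `N ⊆ G` such that any `x ∈ S` whose image `τ x`
vanishes on `N` satisfies `x 1 = 0`. -/
theorem exists_finite_window {G R A : Type} [Monoid G] [Countable G]
    [Ring R] [AddCommGroup A] [Module R A] [IsArtinian R A]
    (S : Submodule R (G → A))
    (hclosed : @IsClosed (G → A) (@Pi.topologicalSpace G (fun _ => A) (fun _ => ⊥))
      (S : Set (G → A)))
    (τ : (G → A) → (G → A))
    (hca : IsCA (S : Set (G → A)) τ)
    (hinj : Set.InjOn τ (S : Set (G → A)))
    (hadd : ∀ x ∈ S, ∀ y ∈ S, τ (x + y) = τ x + τ y)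
    (hsmul : ∀ r : R, ∀ x ∈ S, τ (r • x) = r • τ x) :
    ∃ N : Set G, N.Finite ∧ ∀ x ∈ S, (∀ g ∈ N, τ x g = 0) → x 1 = 0 := by
  classical
  obtain ⟨M, hMfin, μ, hμ⟩ := hca
  obtain ⟨e, he⟩ := exists_surjective_nat G
  -- increasing finite sets exhausting G
  set D : ℕ → Set G := fun n => insert 1 (e '' Set.Iic n) with hDdef
  have hDfin : ∀ n, (D n).Finite := fun n => ((Set.finite_Iic n).image e).insert 1
  have hDmono : Monotone D := by
    intro m n h
    exact Set.insert_subset_insert (Set.image_mono (f := e) (Set.Iic_subset_Iic.mpr h))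
  have hone : ∀ n, (1 : G) ∈ D n := fun n => Set.mem_insert _ _
  have hDcover : ∀ g : G, ∃ n, g ∈ D n := by
    intro g
    obtain ⟨k, rfl⟩ := he g
    exact ⟨k, Or.inr ⟨k, le_refl k, rfl⟩⟩
  set E : ℕ → Set G := fun n => D n ∪ M * D n with hEdef
  have hEfin : ∀ n, (E n).Finite := fun n => (hDfin n).union (hMfin.mul (hDfin n))
  have hEmono : Monotone E := by
    intro m n h
    exact Set.union_subset_union (hDmono h) (Set.mul_subset_mul_left (hDmono h))
  have hDE : ∀ n, D n ⊆ E n := fun n => Set.subset_union_left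
  -- basic linearity facts
  have hτ0 : τ 0 = 0 := by
    have h := hadd 0 S.zero_mem 0 S.zero_mem
    rw [add_zero] at h
    exact left_eq_add.mp h
  have hτsub : ∀ x ∈ S, ∀ y ∈ S, τ (x - y) = τ x - τ y := by
    intro x hx y hy
    have hxy : x - y ∈ S := S.sub_mem hx hy
    have h := hadd (x - y) hxy y hy
    rw [sub_add_cancel] at h
    rw [h]; abel
  -- the kernel-type submodules
  set K : ℕ → Submodule R (G → A) := fun n =>
    { carrier := {x | x ∈ S ∧ ∀ g ∈ D n, τ x g = 0}
      add_mem' := by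
        rintro x y ⟨hxS, hx⟩ ⟨hyS, hy⟩
        refine ⟨S.add_mem hxS hyS, fun g hg => ?_⟩
        rw [hadd x hxS y hyS]
        simp [hx g hg, hy g hg]
      zero_mem' := ⟨S.zero_mem, fun g _ => by rw [hτ0]; rfl⟩
      smul_mem' := by
        rintro r x ⟨hxS, hx⟩
        refine ⟨S.smul_mem r hxS, fun g hg => ?_⟩
        rw [hsmul r x hxS]
        simp [hx g hg] } with hKdef
  have hKmem : ∀ n (x : G → A), x ∈ K n ↔ x ∈ S ∧ ∀ g ∈ D n, τ x g = 0 := fun _ _ => Iff.rfl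
  have hKanti : ∀ m n : ℕ, m ≤ n → K n ≤ K m := by
    intro m n h x hx
    exact ⟨((hKmem n x).mp hx).1, fun g hg => ((hKmem n x).mp hx).2 g (hDmono h hg)⟩
  -- restriction maps
  set π : (n : ℕ) → (G → A) →ₗ[R] (↥(E n) → A) :=
    fun n => LinearMap.funLeft R A (fun g : ↥(E n) => (g : G)) with hπdef
  set V : ℕ → Submodule R A := fun n => (K n).map (LinearMap.proj (1 : G)) with hVdef
  have hVanti : ∀ m n : ℕ, m ≤ n → V n ≤ V m := fun _ _ h => Submodule.map_mono (hKanti _ _ h)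
  set W : (m n : ℕ) → Submodule R (↥(E m) → A) := fun m n => (K n).map (π m) with hWdef
  have hWanti : ∀ (m n n' : ℕ), n ≤ n' → W m n' ≤ W m n :=
    fun _ _ _ h => Submodule.map_mono (hKanti _ _ h)
  have main : ∃ n : ℕ, ∀ x, x ∈ K n → x 1 = 0 := by
    by_contra hcon
    push_neg at hcon
    -- stabilize V
    obtain ⟨n0, hn0⟩ := IsArtinian.monotone_stabilizes
      (⟨fun n => OrderDual.toDual (V n), fun a b h => hVanti a b h⟩ : ℕ →o (Submodule R A)ᵒᵈ)
    obtain ⟨x0, hx0K, hx0⟩ := hcon n0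
    set a : A := x0 1 with hadef
    have haV : ∀ n, a ∈ V n := by
      intro n
      have h1 : a ∈ V n0 := ⟨x0, hx0K, rfl⟩
      rcases le_total n n0 with h | h
      · exact hVanti n n0 h h1
      · have heq : V n0 = V n := hn0 n h
        exact heq ▸ h1
    -- stabilize each W m
    have hWstab : ∀ m : ℕ, ∃ nm : ℕ, ∀ n, nm ≤ n → W m nm = W m n := by
      intro m
      haveI : Finite (E m) := (hEfin m).to_subtype
      exact IsArtinian.monotone_stabilizes
        (⟨fun n => OrderDual.toDual (W m n), fun a b h => hWanti m a b h⟩ :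
          ℕ →o (Submodule R (↥(E m) → A))ᵒᵈ)
    choose nm hnm using hWstab
    set Q : (m : ℕ) → Submodule R (↥(E m) → A) := fun m => W m (nm m) with hQdef
    have hQle : ∀ m n, Q m ≤ W m n := by
      intro m n
      rcases le_total (nm m) n with h | h
      · exact le_of_eq (hnm m n h)
      · exact hWanti m n (nm m) h
    -- base of the recursion
    have base : ∃ y, y ∈ K 0 ∧ y 1 = a ∧ π 0 y ∈ Q 0 := by
      obtain ⟨x, hxK, hx1⟩ := haV (nm 0)
      exact ⟨x, hKanti 0 (nm 0) (Nat.zero_le _) hxK, hx1, ⟨x, hxK, rfl⟩⟩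
    -- recursion step
    have step : ∀ m : ℕ, ∀ y : G → A, (y 1 = a ∧ π m y ∈ Q m) →
        ∃ y', (y' ∈ K (m + 1) ∧ y' 1 = a ∧ π (m + 1) y' ∈ Q (m + 1)) ∧
          ∀ g ∈ E m, y' g = y g := by
      rintro m y ⟨hy1, hyQ⟩
      have hmem : π m y ∈ W m (max (nm (m + 1)) (m + 1)) := hQle m _ hyQ
      obtain ⟨z, hzK, hz⟩ := hmem
      have hagr : ∀ g ∈ E m, z g = y g := by
        intro g hg
        exact congrFun hz ⟨g, hg⟩
      refine ⟨z, ⟨hKanti _ _ (le_max_right _ _) hzK, ?_, ?_⟩, hagr⟩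
      · have h1 : (1 : G) ∈ E m := hDE m (hone m)
        calc z 1 = y 1 := hagr 1 h1
        _ = a := hy1
      · have : π (m + 1) z ∈ W (m + 1) (max (nm (m + 1)) (m + 1)) := ⟨z, hzK, rfl⟩
        rwa [← hnm (m + 1) _ (le_max_left _ _)] at this
    choose step' hstep1 hstep2 using step
    obtain ⟨y0, hy0⟩ := base
    set Y : ∀ m : ℕ, {p : G → A // p ∈ K m ∧ p 1 = a ∧ π m p ∈ Q m} := fun m =>
      Nat.rec ⟨y0, hy0⟩
        (fun m p => ⟨step' m p.1 ⟨p.2.2.1, p.2.2.2⟩, hstep1 m p.1 ⟨p.2.2.1, p.2.2.2⟩⟩) m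
      with hYdef
    set y : ℕ → G → A := fun m => (Y m).1 with hydef
    have hyK : ∀ m, y m ∈ K m := fun m => (Y m).2.1
    have hy1 : ∀ m, y m 1 = a := fun m => (Y m).2.2.1
    have hagree : ∀ m, ∀ g ∈ E m, y (m + 1) g = y m g := by
      intro m g hg
      exact hstep2 m (Y m).1 ⟨(Y m).2.2.1, (Y m).2.2.2⟩ g hg
    have hagree' : ∀ m n : ℕ, m ≤ n → ∀ g ∈ E m, y n g = y m g := by
      intro m n h
      induction n, h using Nat.le_induction with
      | base => intro g _; rfl
      | succ n hmn ih =>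
        intro g hg
        rw [hagree n g (hEmono hmn hg)]
        exact ih g hg
    have hEcover : ∀ g : G, ∃ m, g ∈ E m := fun g => (hDcover g).imp fun n hn => hDE n hn
    choose idx hidx using hEcover
    set xb : G → A := fun g => y (idx g) g with hxbdef
    have hxbE : ∀ m, ∀ g ∈ E m, xb g = y m g := by
      intro m g hg
      have h1 := hagree' (idx g) (max (idx g) m) (le_max_left _ _) g (hidx g)
      have h2 := hagree' m (max (idx g) m) (le_max_right _ _) g hg
      show y (idx g) g = y m g
      rw [← h1, h2]
    have hxbS : xb ∈ S := by
      letI : TopologicalSpace A := ⊥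
      haveI : DiscreteTopology A := ⟨rfl⟩
      have hcl : IsClosed (S : Set (G → A)) := hclosed
      show xb ∈ (S : Set (G → A))
      rw [← hcl.closure_eq]
      rw [mem_closure_iff_nhds]
      intro U hU
      rw [nhds_pi, Filter.mem_pi] at hU
      obtain ⟨I, hIfin, t, ht, hsub⟩ := hU
      have hxt : ∀ i, xb i ∈ t i := by
        intro i
        have := ht i
        rw [nhds_discrete, Filter.mem_pure] at this
        exact this
      set m : ℕ := hIfin.toFinset.sup idx with hmdef
      have hIE : I ⊆ E m := by
        intro i hi
        have hle : idx i ≤ m := Finset.le_sup (hIfin.mem_toFinset.mpr hi)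
        exact hEmono hle (hidx i)
      refine ⟨y m, ?_, ((hKmem m (y m)).mp (hyK m)).1⟩
      apply hsub
      intro i hi
      rw [hagree' (idx i) m (Finset.le_sup (hIfin.mem_toFinset.mpr hi)) i (hidx i)]
      exact hxt i
    have hτxb : ∀ g, τ xb g = 0 := by
      intro g
      obtain ⟨n, hgD⟩ := hDcover g
      have h1 : τ xb g = μ (fun m' : ↥M => bshift g xb m') := hμ xb hxbS g
      have h2 : τ (y n) g = μ (fun m' : ↥M => bshift g (y n) m') :=
        hμ (y n) ((hKmem n (y n)).mp (hyK n)).1 g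
      have h3 : (fun m' : ↥M => bshift g xb m') = fun m' : ↥M => bshift g (y n) m' := by
        funext m'
        show xb (↑m' * g) = y n (↑m' * g)
        exact hxbE n _ (Or.inr (Set.mul_mem_mul m'.2 hgD))
      rw [h1, h3, ← h2]
      exact ((hKmem n (y n)).mp (hyK n)).2 g hgD
    have hxb0 : xb = 0 := by
      apply hinj hxbS S.zero_mem
      funext g
      rw [hτxb g, hτ0]
      rfl
    have ha0 : a = 0 := by
      have h1 : xb 1 = y 0 1 := hxbE 0 1 (hDE 0 (hone 0))
      rw [hy1 0] at h1
      rw [← h1, hxb0]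
      rfl
    exact hx0 ha0
  obtain ⟨n, hn⟩ := main
  exact ⟨D n, hDfin n, fun x hx h0 => hn x ⟨hx, h0⟩⟩

/-- Theorem 7.2, Artinian-module instance. With `G` a countable monoid,
`A` an Artinian `R`-module, `Σ ⊆ A^G` a closed subshift submodule, `τ : Σ → A^G` an injective
cellular automaton which is an `R`-module homomorphism and `Γ = τ(Σ)`: there is a finite
`N ⊆ G` such that for every finite `E ⊇ N` there is an `R`-linear map `η_E : Γ_E → A`
with `η_E(τ(x)|_E) = x(1_G)` for all `x ∈ Σ`. (Here `η_E` is realized as a map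
`(E → A) → A` which is `R`-linear on the submodule `Γ_E`.) -/
theorem left_inverse_linear_local_map {G R A : Type} [Monoid G] [Countable G]
    [Ring R] [AddCommGroup A] [Module R A] [IsArtinian R A]
    (S : Submodule R (G → A)) (hsub : IsSubshift (S : Set (G → A)))
    (hclosed : @IsClosed (G → A) (@Pi.topologicalSpace G (fun _ => A) (fun _ => ⊥))
      (S : Set (G → A)))
    (τ : (G → A) → (G → A))
    (hca : IsCA (S : Set (G → A)) τ)
    (hinj : Set.InjOn τ (S : Set (G → A)))
    (hadd : ∀ x ∈ S, ∀ y ∈ S, τ (x + y) = τ x + τ y)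
    (hsmul : ∀ r : R, ∀ x ∈ S, τ (r • x) = r • τ x) :
    ∃ N : Set G, N.Finite ∧
      ∀ E : Set G, E.Finite → N ⊆ E →
        ∃ η : (↥E → A) → A,
          (∀ u ∈ resSet (τ '' (S : Set (G → A))) E, ∀ v ∈ resSet (τ '' (S : Set (G → A))) E,
            η (u + v) = η u + η v) ∧
          (∀ r : R, ∀ u ∈ resSet (τ '' (S : Set (G → A))) E, η (r • u) = r • η u) ∧
          (∀ x ∈ S, η (fun e : ↥E => τ x e) = x 1) := by
  classical
  obtain ⟨N, hNfin, hN⟩ := exists_finite_window S hclosed τ hca hinj hadd hsmul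
  refine ⟨N, hNfin, ?_⟩
  intro E _hEfin hNE
  have hτsub : ∀ x ∈ S, ∀ y ∈ S, τ (x - y) = τ x - τ y := by
    intro x hx y hy
    have hxy : x - y ∈ S := S.sub_mem hx hy
    have h := hadd (x - y) hxy y hy
    rw [sub_add_cancel] at h
    rw [h]; abel
  have key : ∀ x ∈ S, ∀ y ∈ S, (∀ g : ↥E, τ x ↑g = τ y ↑g) → x 1 = y 1 := by
    intro x hx y hy h
    have hxy : x - y ∈ S := S.sub_mem hx hy
    have h0 : (x - y) 1 = 0 := by
      apply hN (x - y) hxy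
      intro g hg
      rw [hτsub x hx y hy]
      have := h ⟨g, hNE hg⟩
      simp only [Pi.sub_apply, this, sub_self]
    have hxy1 : x 1 - y 1 = 0 := h0
    exact sub_eq_zero.mp hxy1
  have keyeq : ∀ x ∈ S, ∀ y ∈ S, (∀ g : ↥E, τ x ↑g = τ y ↑g) → x 1 = y 1 := key
  set η : (↥E → A) → A := fun u =>
    if h : ∃ x, x ∈ S ∧ (fun e : ↥E => τ x ↑e) = u then h.choose 1 else 0 with hηdef
  have hmem : ∀ u ∈ resSet (τ '' (S : Set (G → A))) E,
      ∃ x, x ∈ S ∧ (fun e : ↥E => τ x ↑e) = u := by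
    rintro u ⟨w, ⟨x, hxS, rfl⟩, rfl⟩
    exact ⟨x, hxS, rfl⟩
  have hηval : ∀ x ∈ S, η (fun e : ↥E => τ x ↑e) = x 1 := by
    intro x hx
    have hex : ∃ z, z ∈ S ∧ (fun e : ↥E => τ z ↑e) = fun e : ↥E => τ x ↑e := ⟨x, hx, rfl⟩
    show (if h : ∃ z, z ∈ S ∧ (fun e : ↥E => τ z ↑e) = fun e : ↥E => τ x ↑e then h.choose 1
      else 0) = x 1
    rw [dif_pos hex]
    exact keyeq _ hex.choose_spec.1 x hx fun g => congrFun hex.choose_spec.2 g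
  refine ⟨η, ?_, ?_, fun x hx => hηval x hx⟩
  · rintro u hu v hv
    obtain ⟨x, hx, rfl⟩ := hmem u hu
    obtain ⟨y, hy, rfl⟩ := hmem v hv
    have hxy : ((fun e : ↥E => τ x ↑e) + fun e : ↥E => τ y ↑e) =
        fun e : ↥E => τ (x + y) ↑e := by
      funext g
      rw [hadd x hx y hy]
      rfl
    rw [hxy, hηval _ (S.add_mem hx hy), hηval x hx, hηval y hy]
    rfl
  · rintro r u hu
    obtain ⟨x, hx, rfl⟩ := hmem u hu
    have hrx : (r • fun e : ↥E => τ x ↑e) = fun e : ↥E => τ (r • x) ↑e := by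
      funext g
      rw [hsmul r x hx]
      rfl
    rw [hrx, hηval _ (S.smul_mem r hx), hηval x hx]
    rfl
end

section
/- Let G be a countable monoid, let R be a ring, and let A be an Artinian R-module. Let Σ ⊂ A^G be a subshift that is an R-submodule of A^G and is closed in the prodiscrete topology, and let τ : Σ → A^G be an injective cellular automaton that is also a homomorphism of R-modules. Suppose Δ ⊂ A^G is a subshift of finite type with Δ ⊂ Σ. Then τ(Δ) is a subshift of finite type of A^G. -/
/-! ### Auxiliary material for the proof -/

/-- The key lemma ("uniform pre-injectivity window"): for an injective linear cellular
automaton on a closed submodule subshift over an Artinian module, for every finite `F ⊆ G`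
there is a finite `E ⊆ G` such that vanishing of `τ x` on `E` forces vanishing of `x` on `F`. -/
theorem lemA_image_sft {G R A : Type} [Monoid G] [Countable G]
    [Ring R] [AddCommGroup A] [Module R A] [IsArtinian R A]
    (S : Submodule R (G → A))
    (hclosed : @IsClosed (G → A) (@Pi.topologicalSpace G (fun _ => A) (fun _ => ⊥))
      (S : Set (G → A)))
    (τ : (G → A) → (G → A))
    (M : Set G) (hMfin : M.Finite) (μ : (↥M → A) → A)
    (hμ : ∀ x ∈ S, ∀ g : G, τ x g = μ (fun m : ↥M => x (↑m * g)))
    (hinj : Set.InjOn τ (S : Set (G → A)))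
    (hadd : ∀ x ∈ S, ∀ y ∈ S, τ (x + y) = τ x + τ y)
    (hsmul : ∀ r : R, ∀ x ∈ S, τ (r • x) = r • τ x)
    (F : Set G) (hF : F.Finite) :
    ∃ E : Set G, E.Finite ∧
      ∀ x ∈ S, (∀ e ∈ E, τ x e = 0) → ∀ f ∈ F, x f = 0 := by
  have hτ0 : τ 0 = 0 := by
    have h := hadd 0 S.zero_mem 0 S.zero_mem
    rw [add_zero] at h
    exact (left_eq_add.mp h)
  have hGne : Nonempty G := ⟨1⟩
  obtain ⟨enum, henum⟩ := exists_surjective_nat G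
  -- the decreasing chain of "kernel" submodules
  let kerS : ℕ → Submodule R (G → A) := fun n =>
    { carrier := {x | x ∈ S ∧ ∀ i, i < n → τ x (enum i) = 0}
      add_mem' := by
        rintro a b ⟨haS, ha⟩ ⟨hbS, hb⟩
        refine ⟨S.add_mem haS hbS, fun i hi => ?_⟩
        rw [hadd a haS b hbS, Pi.add_apply, ha i hi, hb i hi, add_zero]
      zero_mem' := ⟨S.zero_mem, fun i _ => by rw [hτ0]; rfl⟩
      smul_mem' := by
        rintro r a ⟨haS, ha⟩
        refine ⟨S.smul_mem r haS, fun i hi => ?_⟩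
        rw [hsmul r a haS, Pi.smul_apply, ha i hi, smul_zero] }
  have hkermem : ∀ (n : ℕ) (x : G → A),
      x ∈ kerS n ↔ x ∈ S ∧ ∀ i, i < n → τ x (enum i) = 0 := fun n x => Iff.rfl
  have hmono : ∀ {n m : ℕ}, n ≤ m → kerS m ≤ kerS n := by
    intro n m h x hx
    exact ⟨hx.1, fun i hi => hx.2 i (lt_of_lt_of_le hi h)⟩
  -- stabilization of restricted images (uses Artinian)
  have hagree : ∀ T : Set G, T.Finite → ∃ N : ℕ,
      ∀ x ∈ kerS N, ∀ n : ℕ, ∃ x', x' ∈ kerS n ∧ ∀ g ∈ T, x' g = x g := by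
    intro T hT
    haveI : Finite ↥T := hT.to_subtype
    let π : (G → A) →ₗ[R] (↥T → A) := LinearMap.funLeft R A (fun t : ↥T => (t : G))
    let c : ℕ →o (Submodule R (↥T → A))ᵒᵈ :=
      ⟨fun n => OrderDual.toDual ((kerS n).map π),
        fun n m h => Submodule.map_mono (hmono h)⟩
    obtain ⟨N, hN⟩ := IsArtinian.monotone_stabilizes c
    refine ⟨N, fun x hx n => ?_⟩
    rcases le_total n N with h | h
    · exact ⟨x, hmono h hx, fun g _ => rfl⟩
    · have hmem : π x ∈ (kerS n).map π := by
        have he : (kerS N).map π = (kerS n).map π := hN n h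
        rw [← he]
        exact ⟨x, hx, rfl⟩
      obtain ⟨x', hx', hπ⟩ := hmem
      refine ⟨x', hx', fun g hg => ?_⟩
      exact congrFun hπ ⟨g, hg⟩
  obtain ⟨N₀, hN₀⟩ := hagree F hF
  refine ⟨enum '' Set.Iio N₀, (Set.finite_Iio N₀).image enum, ?_⟩
  intro x hxS hxE f hf
  have hx : x ∈ kerS N₀ := ⟨hxS, fun i hi => hxE (enum i) ⟨i, hi, rfl⟩⟩
  -- approximating windows
  let Fk : ℕ → Set G := fun k => F ∪ enum '' Set.Iio k
  have hFkfin : ∀ k, (Fk k).Finite := fun k => hF.union ((Set.finite_Iio k).image enum)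
  have hFkmono : ∀ {k l : ℕ}, k ≤ l → Fk k ⊆ Fk l := by
    intro k l h
    refine Set.union_subset_union_right F ?_
    exact Set.image_mono (fun i hi => lt_of_lt_of_le hi h)
  let Q : ℕ → (G → A) → Prop := fun k p =>
    ∀ n : ℕ, ∃ x', x' ∈ kerS n ∧ ∀ g ∈ Fk k, x' g = p g
  have hbase : Q 0 x := by
    intro n
    obtain ⟨x', hx', hagr⟩ := hN₀ x hx n
    refine ⟨x', hx', fun g hg => ?_⟩
    rcases hg with hg | ⟨i, hi, _⟩
    · exact hagr g hg
    · exact absurd hi (Nat.not_lt_zero i)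
  have hstep : ∀ (k : ℕ) (p : G → A), Q k p →
      ∃ p', Q (k + 1) p' ∧ ∀ g ∈ Fk k, p' g = p g := by
    intro k p hp
    obtain ⟨N, hN⟩ := hagree (Fk (k + 1)) (hFkfin (k + 1))
    obtain ⟨w, hw, hwp⟩ := hp N
    exact ⟨w, fun n => hN w hw n, hwp⟩
  choose! stepf hQstep hcompat using hstep
  let y : ℕ → (G → A) := fun k => Nat.rec x (fun k' ih => stepf k' ih) k
  have hyQ : ∀ k, Q k (y k) := by
    intro k
    induction k with
    | zero => exact hbase
    | succ k ih => exact hQstep k (y k) ih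
  have hcomp : ∀ k l, k ≤ l → ∀ g ∈ Fk k, y l g = y k g := by
    intro k l hkl
    induction l, hkl using Nat.le_induction with
    | base => intro g _; rfl
    | succ l hkl ih =>
      intro g hg
      have h1 : y (l + 1) g = y l g := hcompat l (y l) (hyQ l) g (hFkmono hkl hg)
      rw [h1, ih g hg]
  choose idx hidx using henum
  let z : G → A := fun g => y (idx g + 1) g
  have hzy : ∀ k, ∀ g ∈ Fk k, z g = y k g := by
    intro k g hg
    have hg' : g ∈ Fk (idx g + 1) := Or.inr ⟨idx g, Nat.lt_succ_self _, hidx g⟩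
    have h1 : y (max k (idx g + 1)) g = y (idx g + 1) g :=
      hcomp (idx g + 1) _ (le_max_right _ _) g hg'
    have h2 : y (max k (idx g + 1)) g = y k g := hcomp k _ (le_max_left _ _) g hg
    show y (idx g + 1) g = y k g
    rw [← h1, h2]
  have hcover : ∀ T : Set G, T.Finite → ∃ k : ℕ, T ⊆ enum '' Set.Iio k := by
    intro T hT
    obtain ⟨b, hb⟩ := (hT.image idx).bddAbove
    refine ⟨b + 1, fun g hg => ⟨idx g, ?_, hidx g⟩⟩
    exact Nat.lt_succ_of_le (hb (Set.mem_image_of_mem idx hg))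
  -- the limit configuration lies in S by closedness
  have hzS : z ∈ (S : Set (G → A)) := by
    letI : TopologicalSpace A := ⊥
    have hcl : z ∈ closure (S : Set (G → A)) := by
      rw [mem_closure_iff]
      intro o ho hzo
      obtain ⟨I, u, hI, hsub⟩ := isOpen_pi_iff.mp ho z hzo
      obtain ⟨k, hk⟩ := hcover ↑I I.finite_toSet
      obtain ⟨x', hx', hagr⟩ := hyQ k 0
      refine ⟨x', hsub fun i hi => ?_, hx'.1⟩
      have hiF : i ∈ Fk k := Or.inr (hk hi)
      have : x' i = z i := by rw [hagr i hiF, ← hzy k i hiF]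
      rw [this]
      exact (hI i hi).2
    exact hclosed.closure_subset hcl
  -- τ z = 0
  have hτz : ∀ g : G, τ z g = 0 := by
    intro g
    obtain ⟨k, hk⟩ := hcover ({g} ∪ (fun m => m * g) '' M)
      ((Set.finite_singleton g).union (hMfin.image _))
    obtain ⟨x', hx', hagr⟩ := hyQ k k
    have hval : τ z g = τ x' g := by
      rw [hμ z hzS g, hμ x' hx'.1 g]
      congr 1
      funext m
      have hm : (↑m * g) ∈ Fk k := Or.inr (hk (Or.inr ⟨↑m, m.2, rfl⟩))
      rw [hzy k _ hm, hagr _ hm]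
    obtain ⟨i, hi, hig⟩ := hk (Or.inl rfl)
    rw [hval, ← hig]
    exact hx'.2 i hi
  have hz0 : z = 0 := by
    refine hinj hzS S.zero_mem ?_
    rw [hτ0]
    funext g
    exact hτz g
  have hfF : f ∈ Fk 0 := Or.inl hf
  have : x f = z f := by rw [hzy 0 f hfF]; rfl
  rw [this, hz0]
  rfl

/-- Theorem 8.1, Artinian-module instance. Let `G` be a countable monoid,
`A` an Artinian `R`-module, `Σ ⊆ A^G` a closed subshift submodule and `τ : Σ → A^G` an
injective cellular automaton which is an `R`-module homomorphism. If `Δ ⊆ Σ` is a subshift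
of finite type, then `τ(Δ)` is a subshift of finite type of `A^G`. -/
theorem image_sft_artinian {G R A : Type} [Monoid G] [Countable G]
    [Ring R] [AddCommGroup A] [Module R A] [IsArtinian R A]
    (S : Submodule R (G → A)) (hsub : IsSubshift (S : Set (G → A)))
    (hclosed : @IsClosed (G → A) (@Pi.topologicalSpace G (fun _ => A) (fun _ => ⊥))
      (S : Set (G → A)))
    (τ : (G → A) → (G → A))
    (hca : IsCA (S : Set (G → A)) τ)
    (hinj : Set.InjOn τ (S : Set (G → A)))
    (hadd : ∀ x ∈ S, ∀ y ∈ S, τ (x + y) = τ x + τ y)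
    (hsmul : ∀ r : R, ∀ x ∈ S, τ (r • x) = r • τ x)
    (Δ : Set (G → A)) (hΔsft : IsSFT Δ) (hΔS : Δ ⊆ (S : Set (G → A))) :
    IsSFT (τ '' Δ) := by
  obtain ⟨M, hMfin, μ, hμ'⟩ := hca
  have hμ : ∀ x ∈ S, ∀ g : G, τ x g = μ (fun m : ↥M => x (↑m * g)) := by
    intro x hx g
    rw [hμ' x hx g]
    rfl
  obtain ⟨D, hDfin, P, hΔ⟩ := hΔsft
  -- equivariance of τ on S
  have hequiv : ∀ x ∈ S, ∀ f e : G, τ (bshift f x) e = τ x (e * f) := by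
    intro x hx f e
    rw [hμ _ (hsub f x hx) e, hμ x hx (e * f)]
    congr 1
    funext m
    show x (↑m * e * f) = x (↑m * (e * f))
    rw [mul_assoc]
  -- Δ is shift-invariant
  have hΔshift : ∀ g : G, ∀ x ∈ Δ, bshift g x ∈ Δ := by
    intro g x hx
    rw [hΔ] at hx ⊢
    intro g'
    have hfun : (fun d : ↥D => bshift g' (bshift g x) ↑d)
        = (fun d : ↥D => bshift (g' * g) x ↑d) := by
      funext d
      show x (↑d * g' * g) = x (↑d * (g' * g))
      rw [mul_assoc]
    rw [hfun]
    exact hx (g' * g)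
  -- the window F₀ and the uniform injectivity window E
  set F₀ : Set G := insert 1 (D ∪ M) with hF₀
  have hF₀fin : F₀.Finite := ((hDfin.union hMfin).insert 1)
  have h1F₀ : (1 : G) ∈ F₀ := Set.mem_insert 1 _
  have hDF₀ : D ⊆ F₀ := fun d hd => Set.mem_insert_of_mem _ (Or.inl hd)
  have hMF₀ : M ⊆ F₀ := fun m hm => Set.mem_insert_of_mem _ (Or.inr hm)
  obtain ⟨E, hEfin, hE⟩ := lemA_image_sft S hclosed τ M hMfin μ hμ hinj hadd hsmul F₀ hF₀fin
  -- the two-point version of the key lemma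
  have hτsub : ∀ x ∈ S, ∀ y ∈ S, τ (x - y) = τ x - τ y := by
    intro x hx y hy
    have h1 : τ ((-1 : R) • y) = (-1 : R) • τ y := hsmul (-1) y hy
    have h2 : x - y = x + (-1 : R) • y := by rw [neg_one_smul, sub_eq_add_neg]
    rw [h2, hadd x hx _ (S.smul_mem _ hy), h1, neg_one_smul, ← sub_eq_add_neg]
  have hE2 : ∀ u ∈ S, ∀ v ∈ S, (∀ e ∈ E, τ u e = τ v e) → ∀ f ∈ F₀, u f = v f := by
    intro u hu v hv h f hf
    have h0 : ∀ e ∈ E, τ (u - v) e = 0 := by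
      intro e he
      rw [hτsub u hu v hv, Pi.sub_apply, h e he, sub_self]
    have := hE (u - v) (S.sub_mem hu hv) h0 f hf
    rw [Pi.sub_apply] at this
    exact sub_eq_zero.mp this
  -- the SFT window for the image
  set D' : Set G := insert 1 (Set.image2 (· * ·) E F₀) with hD'
  have hD'fin : D'.Finite := (hEfin.image2 _ hF₀fin).insert 1
  have h1D' : (1 : G) ∈ D' := Set.mem_insert 1 _
  have hED' : ∀ e ∈ E, ∀ f ∈ F₀, e * f ∈ D' := fun e he f hf =>
    Set.mem_insert_of_mem _ (Set.mem_image2_of_mem he hf)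
  have hEsub : E ⊆ D' := by
    intro e he
    have : e * 1 ∈ D' := hED' e he 1 h1F₀
    rwa [mul_one] at this
  refine ⟨D', hD'fin, resSet (τ '' Δ) D', ?_⟩
  ext y
  constructor
  · rintro ⟨x, hxΔ, rfl⟩
    intro g
    refine ⟨τ (bshift g x), ⟨bshift g x, hΔshift g x hxΔ, rfl⟩, ?_⟩
    funext d
    show τ (bshift g x) ↑d = τ x (↑d * g)
    exact hequiv x (hΔS hxΔ) g ↑d
  · intro hy
    have hz : ∀ g : G, ∃ z, z ∈ Δ ∧ ∀ d ∈ D', τ z d = y (d * g) := by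
      intro g
      obtain ⟨w, hw, hweq⟩ := hy g
      obtain ⟨z, hzΔ, rfl⟩ := hw
      refine ⟨z, hzΔ, fun d hd => ?_⟩
      exact congrFun hweq ⟨d, hd⟩
    choose z hzΔ hzy using hz
    have hzS : ∀ g : G, z g ∈ (S : Set (G → A)) := fun g => hΔS (hzΔ g)
    -- the key compatibility property
    have key : ∀ g : G, ∀ f ∈ F₀, z (f * g) 1 = z g f := by
      intro g f hf
      have hu : bshift f (z g) ∈ (S : Set (G → A)) := hsub f _ (hzS g)
      have heq : ∀ e ∈ E, τ (bshift f (z g)) e = τ (z (f * g)) e := by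
        intro e he
        rw [hequiv _ (hzS g) f e, hzy g (e * f) (hED' e he f hf),
          hzy (f * g) e (hEsub he), mul_assoc]
      have h1 := hE2 _ hu _ (hzS (f * g)) heq 1 h1F₀
      show z (f * g) 1 = z g f
      rw [← h1]
      show z g (1 * f) = z g f
      rw [one_mul]
    set x₀ : G → A := fun h => z h 1 with hx₀
    have hx₀z : ∀ g : G, ∀ f ∈ F₀, x₀ (f * g) = z g f := fun g f hf => key g f hf
    have hx₀Δ : x₀ ∈ Δ := by
      rw [hΔ]
      intro g
      have hP := hzΔ g
      rw [hΔ] at hP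
      have h1 := hP 1
      have hfun : (fun d : ↥D => bshift g x₀ ↑d) = (fun d : ↥D => bshift 1 (z g) ↑d) := by
        funext d
        show x₀ (↑d * g) = z g (↑d * 1)
        rw [mul_one]
        exact hx₀z g ↑d (hDF₀ d.2)
      rw [hfun]
      exact h1
    have hτx : τ x₀ = y := by
      funext g
      rw [hμ x₀ (hΔS hx₀Δ) g]
      have h1 : (fun m : ↥M => x₀ (↑m * g)) = (fun m : ↥M => z g (↑m * 1)) := by
        funext m
        rw [mul_one]
        exact hx₀z g ↑m (hMF₀ m.2)
      rw [h1]
      have h2 := hμ (z g) (hzS g) 1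
      rw [← h2, hzy g 1 h1D', one_mul]
    exact ⟨x₀, hx₀Δ, hτx⟩
end

section
/- Let G be a countable monoid, let R be a ring, and let A be an Artinian R-module. Let Σ ⊂ A^G be a subshift of finite type that is also an R-submodule of A^G. Then for every injective cellular automaton τ : Σ → A^G that is a homomorphism of R-modules, the image τ(Σ) is a subshift of finite type of A^G, and moreover τ(Σ)_E is an R-submodule of A^E for every finite subset E ⊂ G. -/
section AuxCSC

variable {G R A : Type} [Monoid G] [Ring R] [AddCommGroup A] [Module R A]

private lemma bshift_bshift {g g' : G} (x : G → A) :
    bshift g' (bshift g x) = bshift (g' * g) x := by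
  funext h
  show x ((h * g') * g) = x (h * (g' * g))
  rw [mul_assoc]

/-- The submodule of configurations in `S` whose `τ`-image vanishes on `F`. -/
private def Kker (S : Submodule R (G → A)) (τ : (G → A) → (G → A)) (F : Set G)
    (hτ0 : τ 0 = 0)
    (hadd : ∀ x ∈ S, ∀ y ∈ S, τ (x + y) = τ x + τ y)
    (hsmul : ∀ r : R, ∀ x ∈ S, τ (r • x) = r • τ x) : Submodule R (G → A) where
  carrier := {x | x ∈ S ∧ ∀ g ∈ F, τ x g = 0}
  add_mem' := by
    rintro a b ⟨haS, ha⟩ ⟨hbS, hb⟩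
    refine ⟨S.add_mem haS hbS, fun g hg => ?_⟩
    rw [hadd a haS b hbS]
    show τ a g + τ b g = 0
    rw [ha g hg, hb g hg, add_zero]
  zero_mem' := ⟨S.zero_mem, fun g _ => by rw [hτ0]; rfl⟩
  smul_mem' := by
    rintro r a ⟨haS, ha⟩
    refine ⟨S.smul_mem r haS, fun g hg => ?_⟩
    rw [hsmul r a haS]
    show r • τ a g = 0
    rw [ha g hg, smul_zero]

private lemma mem_Kker {S : Submodule R (G → A)} {τ : (G → A) → (G → A)} {F : Set G}
    {hτ0 : τ 0 = 0}
    {hadd : ∀ x ∈ S, ∀ y ∈ S, τ (x + y) = τ x + τ y}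
    {hsmul : ∀ r : R, ∀ x ∈ S, τ (r • x) = r • τ x} {x : G → A} :
    x ∈ Kker S τ F hτ0 hadd hsmul ↔ (x ∈ S ∧ ∀ g ∈ F, τ x g = 0) := Iff.rfl

/-- Key lemma (Mittag-Leffler / Artinian stabilization): an injective linear CA on an
SFT-submodule over a countable monoid admits a finite "kernel window" `N`: if `τ x`
vanishes on `N`, then `x 1 = 0`. -/
private theorem ker_window_lemma [Countable G] [IsArtinian R A]
    (S : Submodule R (G → A)) (D : Set G) (hD : D.Finite) (P : Set (↥D → A))
    (hSP : (S : Set (G → A)) = windowSet D P)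
    (τ : (G → A) → (G → A))
    (M : Set G) (hM : M.Finite) (μ : (↥M → A) → A)
    (hμ : ∀ x ∈ (S : Set (G → A)), ∀ g : G, τ x g = μ (fun m : ↥M => bshift g x m))
    (hinj : Set.InjOn τ (S : Set (G → A)))
    (hτ0 : τ 0 = 0)
    (hadd : ∀ x ∈ S, ∀ y ∈ S, τ (x + y) = τ x + τ y)
    (hsmul : ∀ r : R, ∀ x ∈ S, τ (r • x) = r • τ x) :
    ∃ N : Set G, N.Finite ∧ ∀ x ∈ S, (∀ g ∈ N, τ x g = 0) → x 1 = 0 := by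
  classical
  obtain ⟨e, he⟩ := exists_surjective_nat G
  set E : ℕ → Set G := fun n => e '' {k | k ≤ n} with hE
  have hEfin : ∀ n, (E n).Finite := fun n => (Set.finite_Iic n).image e
  have hEmono : Monotone E := fun a b hab =>
    Set.image_mono (f := e) (fun k hk => le_trans hk hab)
  have hEcov : ∀ g : G, ∃ n, g ∈ E n := by
    intro g
    obtain ⟨k, hk⟩ := he g
    exact ⟨k, ⟨k, le_refl k, hk⟩⟩
  have hFsub : ∀ F : Set G, F.Finite → ∃ n, F ⊆ E n := by
    intro F hF
    choose ι hι using hEcov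
    obtain ⟨n, hn⟩ := (hF.image ι).bddAbove
    exact ⟨n, fun g hg => hEmono (hn (Set.mem_image_of_mem ι hg)) (hι g)⟩
  -- the chain of submodules
  let Kk : ℕ → Submodule R (G → A) := fun m => Kker S τ (E m) hτ0 hadd hsmul
  have hKmem : ∀ m x, x ∈ Kk m ↔ (x ∈ S ∧ ∀ g ∈ E m, τ x g = 0) := fun m x => Iff.rfl
  let Z : (n : ℕ) → (m : ℕ) → Submodule R (↥(E n) → A) := fun n m =>
    (Kk m).map (LinearMap.funLeft R A (Subtype.val : ↥(E n) → G))
  have hZmem : ∀ n m (z : ↥(E n) → A),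
      z ∈ Z n m ↔ ∃ x, x ∈ Kk m ∧ (fun i : ↥(E n) => x ↑i) = z := by
    intro n m z
    rw [Submodule.mem_map]
    rfl
  have hKanti : ∀ m m', m ≤ m' → Kk m' ≤ Kk m := by
    intro m m' h x hx
    exact ⟨((hKmem m' x).mp hx).1, fun g hg => ((hKmem m' x).mp hx).2 g (hEmono h hg)⟩
  have hZanti : ∀ n m m', m ≤ m' → Z n m' ≤ Z n m :=
    fun n m m' h => Submodule.map_mono (hKanti m m' h)
  have hstab : ∀ n, ∃ b, ∀ m, b ≤ m → Z n b = Z n m := by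
    intro n
    haveI : Finite ↥(E n) := (hEfin n).to_subtype
    exact IsArtinian.monotone_stabilizes
      ⟨fun m => Z n m, fun a b hab => hZanti n a b hab⟩
  choose B hB using hstab
  have hStab_le : ∀ n m, Z n (B n) ≤ Z n m := by
    intro n m
    rcases le_total (B n) m with h | h
    · exact le_of_eq (hB n m h)
    · exact hZanti n m (B n) h
  -- one-step extension of stabilized partial configurations
  have hext : ∀ k (z : ↥(E k) → A), z ∈ Z k (B k) →
      ∃ w : ↥(E (k + 1)) → A, w ∈ Z (k + 1) (B (k + 1)) ∧
        ∀ (g : G) (hg : g ∈ E k), w ⟨g, hEmono (Nat.le_succ k) hg⟩ = z ⟨g, hg⟩ := by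
    intro k z hz
    obtain ⟨x, hxK, hxz⟩ := (hZmem k (B (k + 1)) z).mp (hStab_le k (B (k + 1)) hz)
    refine ⟨fun i : ↥(E (k + 1)) => x ↑i, (hZmem _ _ _).mpr ⟨x, hxK, rfl⟩, ?_⟩
    intro g hg
    exact congrFun hxz ⟨g, hg⟩
  -- choose the base point index
  obtain ⟨k₀, hk₀⟩ := he 1
  have h1mem : (1 : G) ∈ E k₀ := ⟨k₀, le_refl k₀, hk₀⟩
  refine ⟨E (B k₀), hEfin _, ?_⟩
  intro x hxS hτxN
  have hz₀ : (fun i : ↥(E k₀) => x ↑i) ∈ Z k₀ (B k₀) :=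
    (hZmem _ _ _).mpr ⟨x, (hKmem _ x).mpr ⟨hxS, hτxN⟩, rfl⟩
  -- build the compatible sequence of stabilized partial configurations
  let f : (k : ℕ) → {w : ↥(E (k₀ + k)) → A // w ∈ Z (k₀ + k) (B (k₀ + k))} :=
    fun k => Nat.rec ⟨fun i => x ↑i, hz₀⟩
      (fun k ih => ⟨(hext (k₀ + k) ih.1 ih.2).choose,
        (hext (k₀ + k) ih.1 ih.2).choose_spec.1⟩) k
  have hcomp : ∀ k (g : G) (hg : g ∈ E (k₀ + k)),
      (f (k + 1)).val ⟨g, hEmono (Nat.le_succ (k₀ + k)) hg⟩ = (f k).val ⟨g, hg⟩ :=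
    fun k => (hext (k₀ + k) (f k).1 (f k).2).choose_spec.2
  have hcomp2 : ∀ k k', k ≤ k' → ∀ (g : G) (hg : g ∈ E (k₀ + k)) (hg' : g ∈ E (k₀ + k')),
      (f k').val ⟨g, hg'⟩ = (f k).val ⟨g, hg⟩ := by
    intro k k' hkk'
    induction k', hkk' using Nat.le_induction with
    | base => intro g hg hg'; rfl
    | succ k' hk ih =>
      intro g hg hg'
      have hgmid : g ∈ E (k₀ + k') := hEmono (by omega) hg
      have h1 : (f (k' + 1)).val ⟨g, hg'⟩ = (f k').val ⟨g, hgmid⟩ := hcomp k' g hgmid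
      exact h1.trans (ih g hg hgmid)
  have hcompat : ∀ (g : G) (k k' : ℕ) (hg : g ∈ E (k₀ + k)) (hg' : g ∈ E (k₀ + k')),
      (f k).val ⟨g, hg⟩ = (f k').val ⟨g, hg'⟩ := by
    intro g k k' hg hg'
    rcases le_total k k' with h | h
    · exact (hcomp2 k k' h g hg hg').symm
    · exact hcomp2 k' k h g hg' hg
  -- glue into a global configuration
  choose idx hidx using hEcov
  let y : G → A := fun g => (f (idx g)).val ⟨g, hEmono (Nat.le_add_left (idx g) k₀) (hidx g)⟩
  have hy : ∀ (g : G) (k : ℕ) (hg : g ∈ E (k₀ + k)), y g = (f k).val ⟨g, hg⟩ := by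
    intro g k hg
    exact hcompat g (idx g) k _ hg
  -- witnesses: y agrees on E (k₀+k) with some element of Kk m, for every k, m
  have hwit : ∀ k m : ℕ, ∃ x' : G → A, (x' ∈ S ∧ ∀ g ∈ E m, τ x' g = 0) ∧
      ∀ g ∈ E (k₀ + k), x' g = y g := by
    intro k m
    obtain ⟨x', hx'K, hx'⟩ := (hZmem _ _ _).mp (hStab_le (k₀ + k) m (f k).2)
    refine ⟨x', (hKmem m x').mp hx'K, ?_⟩
    intro g hg
    exact (congrFun hx' ⟨g, hg⟩).trans (hy g k hg).symm
  -- y belongs to S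
  have hyS : y ∈ (S : Set (G → A)) := by
    rw [hSP]
    intro g
    obtain ⟨n, hn⟩ := hFsub ((fun d => d * g) '' D) (hD.image _)
    have hn' : (fun d => d * g) '' D ⊆ E (k₀ + n) :=
      fun a ha => hEmono (Nat.le_add_left n k₀) (hn ha)
    obtain ⟨x', ⟨hx'S, _⟩, hx'y⟩ := hwit n 0
    have hx'w : x' ∈ windowSet D P := hSP ▸ hx'S
    have hfun : (fun d : ↥D => bshift g y ↑d) = (fun d : ↥D => bshift g x' ↑d) := by
      funext d
      exact (hx'y (↑d * g) (hn' ⟨↑d, d.2, rfl⟩)).symm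
    rw [hfun]
    exact hx'w g
  -- τ y vanishes everywhere
  have hτy : ∀ g, τ y g = 0 := by
    intro g
    obtain ⟨n, hn⟩ := hFsub ((fun m' => m' * g) '' M) (hM.image _)
    have hn' : (fun m' => m' * g) '' M ⊆ E (k₀ + n) :=
      fun a ha => hEmono (Nat.le_add_left n k₀) (hn ha)
    obtain ⟨x', ⟨hx'S, hx'0⟩, hx'y⟩ := hwit n (idx g)
    rw [hμ y hyS g]
    have hfun : (fun m' : ↥M => bshift g y ↑m') = (fun m' : ↥M => bshift g x' ↑m') := by
      funext m'
      exact (hx'y (↑m' * g) (hn' ⟨↑m', m'.2, rfl⟩)).symm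
    rw [hfun, ← hμ x' hx'S g]
    exact hx'0 g (hidx g)
  -- injectivity forces y = 0, hence x 1 = 0
  have hy0 : y = 0 := by
    apply hinj hyS S.zero_mem
    rw [hτ0]
    funext g
    exact hτy g
  have h5 : y 1 = x 1 := hy 1 0 h1mem
  rw [hy0] at h5
  exact h5.symm

end AuxCSC

/-- Corollary 8.2, Artinian-module instance. Let `G` be a countable monoid,
`A` an Artinian `R`-module, and `Σ ⊆ A^G` a subshift of finite type which is an `R`-submodule
of `A^G`. Then for every injective cellular automaton `τ : Σ → A^G` which is an `R`-module
homomorphism, the image `τ(Σ)` is a subshift of finite type, and moreover `τ(Σ)_E` is an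
`R`-submodule of `A^E` for every finite `E ⊆ G`. -/
theorem image_sft_submodule_artinian {G R A : Type} [Monoid G] [Countable G]
    [Ring R] [AddCommGroup A] [Module R A] [IsArtinian R A]
    (S : Submodule R (G → A)) (hsft : IsSFT (S : Set (G → A)))
    (τ : (G → A) → (G → A))
    (hca : IsCA (S : Set (G → A)) τ)
    (hinj : Set.InjOn τ (S : Set (G → A)))
    (hadd : ∀ x ∈ S, ∀ y ∈ S, τ (x + y) = τ x + τ y)
    (hsmul : ∀ r : R, ∀ x ∈ S, τ (r • x) = r • τ x) :
    IsSFT (τ '' (S : Set (G → A))) ∧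
      ∀ E : Set G, E.Finite →
        ∃ p : Submodule R (↥E → A), (p : Set (↥E → A)) = resSet (τ '' (S : Set (G → A))) E := by
  classical
  obtain ⟨D, hD, P, hSP⟩ := hsft
  obtain ⟨M, hM, μ, hμ⟩ := hca
  -- τ 0 = 0
  have hτ0 : τ 0 = 0 := by
    have h := hadd 0 S.zero_mem 0 S.zero_mem
    rw [add_zero] at h
    have h' : τ 0 + 0 = τ 0 + τ 0 := by rw [add_zero]; exact h
    exact (add_left_cancel h').symm
  -- shift invariance of S
  have hSinv : ∀ (g : G), ∀ x ∈ (S : Set (G → A)), bshift g x ∈ (S : Set (G → A)) := by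
    intro g x hx
    rw [hSP] at hx ⊢
    intro g'
    rw [bshift_bshift]
    exact hx (g' * g)
  -- equivariance of τ on S
  have heqv : ∀ x ∈ (S : Set (G → A)), ∀ g : G, τ (bshift g x) = bshift g (τ x) := by
    intro x hx g
    funext h
    have h1 := hμ (bshift g x) (hSinv g x hx) h
    have h2 := hμ x hx (h * g)
    rw [h1]
    show _ = τ x (h * g)
    rw [h2]
    congr 1
    funext m
    show x ((↑m * h) * g) = x (↑m * (h * g))
    rw [mul_assoc]
  -- difference rule
  have hsub : ∀ x ∈ (S : Set (G → A)), ∀ y ∈ (S : Set (G → A)), τ (x - y) = τ x - τ y := by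
    intro x hx y hy
    have h1 : τ ((-1 : R) • y) = (-1 : R) • τ y := hsmul (-1) y hy
    have h2 := hadd x hx ((-1 : R) • y) (S.smul_mem _ hy)
    rw [sub_eq_add_neg, ← neg_one_smul R y, h2, h1, neg_one_smul, ← sub_eq_add_neg]
  -- the kernel window
  obtain ⟨N, hN, hker⟩ := ker_window_lemma S D hD P hSP τ M hM μ hμ hinj hτ0 hadd hsmul
  have hdiff : ∀ u ∈ (S : Set (G → A)), ∀ v ∈ (S : Set (G → A)),
      (∀ g ∈ N, τ u g = τ v g) → u 1 = v 1 := by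
    intro u hu v hv h
    have huv : u - v ∈ S := S.sub_mem hu hv
    have h0 : (u - v) 1 = 0 := by
      apply hker (u - v) huv
      intro g hg
      rw [hsub u hu v hv]
      show τ u g - τ v g = 0
      rw [h g hg, sub_self]
    exact sub_eq_zero.mp (show u 1 - v 1 = 0 from h0)
  have hdiff' : ∀ u ∈ (S : Set (G → A)), ∀ v ∈ (S : Set (G → A)),
      (∀ g ∈ N, τ u g = τ v g) → u 1 = v 1 := hdiff
  -- local inverse map ν
  let ν : (↥N → A) → A := fun q =>
    if h : ∃ x, x ∈ (S : Set (G → A)) ∧ (fun n : ↥N => τ x ↑n) = q then h.choose 1 else 0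
  have hν : ∀ x ∈ (S : Set (G → A)), ∀ g : G, ν (fun n : ↥N => τ x (↑n * g)) = x g := by
    intro x hx g
    have hxg : bshift g x ∈ (S : Set (G → A)) := hSinv g x hx
    have hkey : (fun n : ↥N => τ (bshift g x) ↑n) = (fun n : ↥N => τ x (↑n * g)) := by
      funext n
      rw [heqv x hx g]
      rfl
    have hw : ∃ x', x' ∈ (S : Set (G → A)) ∧
        (fun n : ↥N => τ x' ↑n) = (fun n : ↥N => τ x (↑n * g)) := ⟨bshift g x, hxg, hkey⟩
    show dite _ _ _ = x g
    rw [dif_pos hw]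
    have hspec := hw.choose_spec
    have h1 : hw.choose 1 = (bshift g x) 1 := by
      apply hdiff hw.choose hspec.1 (bshift g x) hxg
      intro g' hg'
      have := congrFun (hspec.2.trans hkey.symm) ⟨g', hg'⟩
      exact this
    rw [h1]
    show x (1 * g) = x g
    rw [one_mul]
  -- the window for the image
  let Kset : Set G := ((fun p : G × G => p.1 * p.2) '' (N ×ˢ D)) ∪
      ((fun p : G × G => p.1 * p.2) '' (N ×ˢ M)) ∪ {1}
  have hKfin : Kset.Finite :=
    (((hN.prod hD).image _).union ((hN.prod hM).image _)).union (Set.finite_singleton 1)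
  have hmemND : ∀ (n : ↥N) (d : ↥D), (↑n * ↑d : G) ∈ Kset :=
    fun n d => Or.inl (Or.inl ⟨(↑n, ↑d), ⟨n.2, d.2⟩, rfl⟩)
  have hmemNM : ∀ (n : ↥N) (m : ↥M), (↑n * ↑m : G) ∈ Kset :=
    fun n m => Or.inl (Or.inr ⟨(↑n, ↑m), ⟨n.2, m.2⟩, rfl⟩)
  have hmem1 : (1 : G) ∈ Kset := Or.inr rfl
  let P' : Set (↥Kset → A) := {z |
    (fun d : ↥D => ν (fun n : ↥N => z ⟨↑n * ↑d, hmemND n d⟩)) ∈ P ∧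
    μ (fun m : ↥M => ν (fun n : ↥N => z ⟨↑n * ↑m, hmemNM n m⟩)) = z ⟨1, hmem1⟩}
  constructor
  · -- τ '' S is an SFT
    refine ⟨Kset, hKfin, P', ?_⟩
    ext y
    constructor
    · rintro ⟨x, hxS, rfl⟩
      intro g
      constructor
      · have h1 : (fun d : ↥D =>
            ν (fun n : ↥N => bshift g (τ x) ((⟨↑n * ↑d, hmemND n d⟩ : ↥Kset) : G))) =
            fun d : ↥D => x (↑d * g) := by
          funext d
          show ν (fun n : ↥N => τ x ((↑n * ↑d) * g)) = x (↑d * g)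
          have hrw : (fun n : ↥N => τ x ((↑n * ↑d) * g)) =
              (fun n : ↥N => τ x (↑n * (↑d * g))) := by
            funext n; rw [mul_assoc]
          rw [hrw]
          exact hν x hxS (↑d * g)
        show _ ∈ P
        rw [h1]
        exact (show x ∈ windowSet D P from hSP ▸ hxS) g
      · show μ _ = bshift g (τ x) ((⟨1, hmem1⟩ : ↥Kset) : G)
        have hrhs : bshift g (τ x) ((⟨1, hmem1⟩ : ↥Kset) : G) = τ x g := by
          show τ x (1 * g) = τ x g
          rw [one_mul]
        rw [hrhs, hμ x hxS g]
        congr 1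
        funext m
        show ν (fun n : ↥N => τ x ((↑n * ↑m) * g)) = x (↑m * g)
        have hrw : (fun n : ↥N => τ x ((↑n * ↑m) * g)) =
            (fun n : ↥N => τ x (↑n * (↑m * g))) := by
          funext n; rw [mul_assoc]
        rw [hrw]
        exact hν x hxS (↑m * g)
    · intro hy
      set x : G → A := fun g => ν (fun n : ↥N => y (↑n * g)) with hxdef
      have hxS : x ∈ (S : Set (G → A)) := by
        rw [hSP]
        intro g
        have h1 := (hy g).1
        have hfun : (fun d : ↥D => bshift g x ↑d) =
            (fun d : ↥D => ν (fun n : ↥N =>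
              bshift g y ((⟨↑n * ↑d, hmemND n d⟩ : ↥Kset) : G))) := by
          funext d
          show ν (fun n : ↥N => y (↑n * (↑d * g))) = ν (fun n : ↥N => y ((↑n * ↑d) * g))
          congr 1
          funext n
          rw [mul_assoc]
        rw [hfun]
        exact h1
      have hτx : τ x = y := by
        funext g
        have h2 := (hy g).2
        rw [hμ x hxS g]
        have hfun : (fun m : ↥M => bshift g x ↑m) =
            (fun m : ↥M => ν (fun n : ↥N =>
              bshift g y ((⟨↑n * ↑m, hmemNM n m⟩ : ↥Kset) : G))) := by
          funext m
          show ν (fun n : ↥N => y (↑n * (↑m * g))) = ν (fun n : ↥N => y ((↑n * ↑m) * g))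
          congr 1
          funext n
          rw [mul_assoc]
        rw [hfun, h2]
        show y (1 * g) = y g
        rw [one_mul]
      exact ⟨x, hxS, hτx⟩
  · -- restrictions are submodules
    intro E hE
    let T : Submodule R (G → A) :=
      { carrier := τ '' (S : Set (G → A))
        add_mem' := by
          rintro a b ⟨xa, hxa, rfl⟩ ⟨xb, hxb, rfl⟩
          exact ⟨xa + xb, S.add_mem hxa hxb, hadd xa hxa xb hxb⟩
        zero_mem' := ⟨0, S.zero_mem, hτ0⟩
        smul_mem' := by
          rintro r a ⟨xa, hxa, rfl⟩
          exact ⟨r • xa, S.smul_mem r hxa, hsmul r xa hxa⟩ }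
    refine ⟨T.map (LinearMap.funLeft R A (Subtype.val : ↥E → G)), ?_⟩
    rw [Submodule.map_coe]
    rfl
end

section
/- Let G be a countable monoid, let R be a ring, and let A be an Artinian R-module. Let Σ ⊂ A^G be a subshift that is an R-submodule of A^G and is closed in the prodiscrete topology, and let τ : Σ → A^G be an injective cellular automaton that is also a homomorphism of R-modules. Suppose Δ ⊂ A^G is a subshift with Δ ⊂ Σ such that τ(Δ) is a subshift of finite type. Then Δ is a subshift of finite type. -/
namespace PreimageSFTAux

variable {G R A : Type} [Ring R] [AddCommGroup A] [Module R A]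

/-- Restriction to a subset, as a linear map. -/
def resL (F : Set G) : (G → A) →ₗ[R] (↥F → A) := LinearMap.funLeft R A Subtype.val

/-- Mittag-Leffler-type one-step lifting, via the Artinian chain condition. -/
theorem claimA [IsArtinian R A] {F F' : Set G} (hFF' : F ⊆ F') (hF' : F'.Finite)
    (Λ : ℕ → Submodule R (G → A)) (hanti : ∀ ⦃m n : ℕ⦄, m ≤ n → Λ n ≤ Λ m)
    (q : ↥F → A) (hq : ∀ n, q ∈ (Λ n).map (resL F)) :
    ∃ p : ↥F' → A, (∀ n, p ∈ (Λ n).map (resL (R := R) F')) ∧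
      ∀ (g : G) (hg : g ∈ F), p ⟨g, hFF' hg⟩ = q ⟨g, hg⟩ := by
  haveI : Finite ↥F' := hF'.to_subtype
  set ρ : (↥F' → A) →ₗ[R] (↥F → A) := LinearMap.funLeft R A (Set.inclusion hFF') with hρdef
  have hcomp : ∀ y : G → A, ρ (resL (R := R) F' y) = resL (R := R) F y := fun y => rfl
  have hmonoC : ∀ ⦃m n : ℕ⦄, m ≤ n →
      ((Λ n).map (resL (R := R) F') ⊓ LinearMap.ker ρ) ≤
        ((Λ m).map (resL (R := R) F') ⊓ LinearMap.ker ρ) :=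
    fun m n h => inf_le_inf_right _ (Submodule.map_mono (hanti h))
  obtain ⟨n₀, hstab⟩ := IsArtinian.monotone_stabilizes
    (⟨fun n => OrderDual.toDual ((Λ n).map (resL (R := R) F') ⊓ LinearMap.ker ρ),
      fun m n h => hmonoC h⟩ : ℕ →o (Submodule R (↥F' → A))ᵒᵈ)
  obtain ⟨y, hyΛ, hy⟩ := Submodule.mem_map.1 (hq n₀)
  refine ⟨resL (R := R) F' y, fun n => ?_, fun g hg => ?_⟩
  · rcases le_total n n₀ with h | h
    · exact Submodule.mem_map.2 ⟨y, hanti h hyΛ, rfl⟩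
    · obtain ⟨w, hwΛ, hw⟩ := Submodule.mem_map.1 (hq n)
      have hdiff : resL (R := R) F' y - resL (R := R) F' w ∈
          (Λ n₀).map (resL (R := R) F') ⊓ LinearMap.ker ρ := by
        refine ⟨sub_mem (Submodule.mem_map.2 ⟨y, hyΛ, rfl⟩)
          (Submodule.mem_map.2 ⟨w, hanti h hwΛ, rfl⟩), ?_⟩
        show ρ (resL (R := R) F' y - resL (R := R) F' w) = 0
        rw [map_sub, hcomp, hcomp, hy, hw, sub_self]
      have hEq : ((Λ n₀).map (resL (R := R) F') ⊓ LinearMap.ker ρ)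
          = ((Λ n).map (resL (R := R) F') ⊓ LinearMap.ker ρ) := hstab n h
      rw [hEq] at hdiff
      have hsplit : resL (R := R) F' y = resL (R := R) F' w +
          (resL (R := R) F' y - resL (R := R) F' w) := by abel
      rw [hsplit]
      exact Submodule.add_mem _ (Submodule.mem_map.2 ⟨w, hwΛ, rfl⟩) hdiff.1
  · show y g = q ⟨g, hg⟩
    rw [← hy]
    rfl

/-- Mittag-Leffler lemma: an element of all the images of a decreasing sequence of
"locally determined" submodules over a finite window lifts to an element of the
intersection. -/
theorem ML [IsArtinian R A]
    (E : ℕ → Set G) (hEfin : ∀ k, (E k).Finite) (hEmono : ∀ k, E k ⊆ E (k + 1))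
    (hEcover : ∀ g : G, ∃ k, g ∈ E k)
    (Λ : ℕ → Submodule R (G → A)) (hanti : ∀ ⦃m n : ℕ⦄, m ≤ n → Λ n ≤ Λ m)
    (hloc : ∀ n (x : G → A), (∀ k, ∃ y ∈ Λ n, ∀ g ∈ E k, y g = x g) → x ∈ Λ n)
    {F : Set G} (hF : F ⊆ E 0)
    (q : ↥F → A) (hq : ∀ n, q ∈ (Λ n).map (resL (R := R) F)) :
    ∃ x : G → A, (∀ n, x ∈ Λ n) ∧ ∀ (g : G) (hg : g ∈ F), x g = q ⟨g, hg⟩ := by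
  have hEle : ∀ ⦃k l : ℕ⦄, k ≤ l → E k ⊆ E l := by
    intro k l h
    induction l, h using Nat.le_induction with
    | base => exact subset_rfl
    | succ l hl ih => exact fun a ha => hEmono l (ih ha)
  obtain ⟨p₀, hp₀, hp₀q⟩ := claimA hF (hEfin 0) Λ hanti q hq
  have hstep : ∀ k (p : ↥(E k) → A), (∀ n, p ∈ (Λ n).map (resL (R := R) (E k))) →
      ∃ p' : ↥(E (k + 1)) → A, (∀ n, p' ∈ (Λ n).map (resL (R := R) (E (k + 1)))) ∧
        ∀ (g : G) (hg : g ∈ E k), p' ⟨g, hEmono k hg⟩ = p ⟨g, hg⟩ :=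
    fun k p hp => claimA (hEmono k) (hEfin (k + 1)) Λ hanti p hp
  let seq : ∀ k, {p : ↥(E k) → A // ∀ n, p ∈ (Λ n).map (resL (R := R) (E k))} :=
    fun k => Nat.rec ⟨p₀, hp₀⟩
      (fun k ih => ⟨(hstep k ih.1 ih.2).choose, (hstep k ih.1 ih.2).choose_spec.1⟩) k
  have hsucc : ∀ k (g : G) (hg : g ∈ E k),
      (seq (k + 1)).1 ⟨g, hEmono k hg⟩ = (seq k).1 ⟨g, hg⟩ :=
    fun k g hg => (hstep k (seq k).1 (seq k).2).choose_spec.2 g hg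
  have hcompat : ∀ (k l : ℕ), k ≤ l → ∀ (g : G) (hg : g ∈ E k) (hg' : g ∈ E l),
      (seq l).1 ⟨g, hg'⟩ = (seq k).1 ⟨g, hg⟩ := by
    intro k l hkl
    induction l, hkl using Nat.le_induction with
    | base => intro g hg hg'; rfl
    | succ l hl ih =>
      intro g hg hg'
      have hgl : g ∈ E l := hEle hl hg
      have h1 : (seq (l + 1)).1 ⟨g, hEmono l hgl⟩ = (seq l).1 ⟨g, hgl⟩ := hsucc l g hgl
      exact h1.trans (ih g hg hgl)
  choose kof hkof using hEcover
  let x : G → A := fun g => (seq (kof g)).1 ⟨g, hkof g⟩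
  have hx : ∀ (k : ℕ) (g : G) (hg : g ∈ E k), x g = (seq k).1 ⟨g, hg⟩ := by
    intro k g hg
    have h1 : x g = (seq (max k (kof g))).1 ⟨g, hEle (le_max_right _ _) (hkof g)⟩ :=
      (hcompat _ _ (le_max_right _ _) g (hkof g) _).symm
    rw [h1, hcompat k _ (le_max_left _ _) g hg _]
  refine ⟨x, fun n => hloc n x fun k => ?_, fun g hg => ?_⟩
  · obtain ⟨y, hyΛ, hy⟩ := Submodule.mem_map.1 ((seq k).2 n)
    refine ⟨y, hyΛ, fun g hg => ?_⟩
    have h2 : y g = (seq k).1 ⟨g, hg⟩ := by rw [← hy]; rfl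
    rw [h2, ← hx k g hg]
  · exact (hx 0 g (hF hg)).trans (hp₀q g hg)

variable [Monoid G]

/-- The submodule of configurations which are locally admissible for `S` on window `F`
and killed by the extended local map of `μ`. -/
def Ksub (S : Submodule R (G → A)) (M F : Set G) (μ : (↥M → A) → A)
    (hMF : M ⊆ F)
    (hμadd : ∀ u ∈ S, ∀ v ∈ S, μ (fun m : ↥M => u ↑m + v ↑m)
      = μ (fun m : ↥M => u ↑m) + μ (fun m : ↥M => v ↑m))
    (hμsmul : ∀ (r : R), ∀ u ∈ S, μ (fun m : ↥M => r • u ↑m)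
      = r • μ (fun m : ↥M => u ↑m))
    (hμzero : μ (fun _ : ↥M => (0 : A)) = 0) : Submodule R (G → A) where
  carrier := {x | (∀ g : G, ∃ u ∈ S, ∀ i ∈ F, u i = x (i * g)) ∧
    ∀ g : G, μ (fun m : ↥M => x (↑m * g)) = 0}
  zero_mem' := by
    refine ⟨fun g => ⟨0, S.zero_mem, fun i _ => rfl⟩, fun g => ?_⟩
    exact hμzero
  add_mem' := by
    rintro x y ⟨hx1, hx2⟩ ⟨hy1, hy2⟩
    refine ⟨fun g => ?_, fun g => ?_⟩
    · obtain ⟨u, hu, hu2⟩ := hx1 g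
      obtain ⟨v, hv, hv2⟩ := hy1 g
      refine ⟨u + v, S.add_mem hu hv, fun i hi => ?_⟩
      show u i + v i = x (i * g) + y (i * g)
      rw [hu2 i hi, hv2 i hi]
    · obtain ⟨u, hu, hu2⟩ := hx1 g
      obtain ⟨v, hv, hv2⟩ := hy1 g
      have e1 : (fun m : ↥M => (x + y) (↑m * g)) = fun m : ↥M => u ↑m + v ↑m :=
        funext fun m => by
          show x (↑m * g) + y (↑m * g) = u ↑m + v ↑m
          rw [hu2 _ (hMF m.2), hv2 _ (hMF m.2)]
      have e2 : (fun m : ↥M => u ↑m) = fun m : ↥M => x (↑m * g) :=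
        funext fun m => hu2 _ (hMF m.2)
      have e3 : (fun m : ↥M => v ↑m) = fun m : ↥M => y (↑m * g) :=
        funext fun m => hv2 _ (hMF m.2)
      rw [e1, hμadd u hu v hv, e2, e3, hx2 g, hy2 g, add_zero]
  smul_mem' := by
    rintro r x ⟨hx1, hx2⟩
    refine ⟨fun g => ?_, fun g => ?_⟩
    · obtain ⟨u, hu, hu2⟩ := hx1 g
      refine ⟨r • u, S.smul_mem r hu, fun i hi => ?_⟩
      show r • u i = r • x (i * g)
      rw [hu2 i hi]
    · obtain ⟨u, hu, hu2⟩ := hx1 g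
      have e1 : (fun m : ↥M => (r • x) (↑m * g)) = fun m : ↥M => r • u ↑m :=
        funext fun m => by
          show r • x (↑m * g) = r • u ↑m
          rw [hu2 _ (hMF m.2)]
      have e2 : (fun m : ↥M => u ↑m) = fun m : ↥M => x (↑m * g) :=
        funext fun m => hu2 _ (hMF m.2)
      rw [e1, hμsmul r u hu, e2, hx2 g, smul_zero]

theorem mem_Ksub {S : Submodule R (G → A)} {M F : Set G} {μ : (↥M → A) → A}
    {hMF : M ⊆ F} {hμadd hμsmul hμzero} {x : G → A} :
    x ∈ Ksub S M F μ hMF hμadd hμsmul hμzero ↔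
      (∀ g : G, ∃ u ∈ S, ∀ i ∈ F, u i = x (i * g)) ∧
        ∀ g : G, μ (fun m : ↥M => x (↑m * g)) = 0 :=
  Iff.rfl

end PreimageSFTAux

open PreimageSFTAux in
/-- Theorem 8.3, Artinian-module instance. Let `G` be a countable monoid,
`A` an Artinian `R`-module, `Σ ⊆ A^G` a closed subshift submodule and `τ : Σ → A^G` an
injective cellular automaton which is an `R`-module homomorphism. If `Δ ⊆ Σ` is a subshift
such that `τ(Δ)` is a subshift of finite type, then `Δ` is a subshift of finite type. -/
theorem preimage_sft_artinian {G R A : Type} [Monoid G] [Countable G]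
    [Ring R] [AddCommGroup A] [Module R A] [IsArtinian R A]
    (S : Submodule R (G → A)) (hsub : IsSubshift (S : Set (G → A)))
    (hclosed : @IsClosed (G → A) (@Pi.topologicalSpace G (fun _ => A) (fun _ => ⊥))
      (S : Set (G → A)))
    (τ : (G → A) → (G → A))
    (hca : IsCA (S : Set (G → A)) τ)
    (hinj : Set.InjOn τ (S : Set (G → A)))
    (hadd : ∀ x ∈ S, ∀ y ∈ S, τ (x + y) = τ x + τ y)
    (hsmul : ∀ r : R, ∀ x ∈ S, τ (r • x) = r • τ x)
    (Δ : Set (G → A)) (hΔ : IsSubshift Δ) (hΔS : Δ ⊆ (S : Set (G → A)))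
    (hsft : IsSFT (τ '' Δ)) :
    IsSFT Δ := by
  classical
  obtain ⟨M, hMfin, μ, hμ⟩ := hca
  obtain ⟨D, hDfin, P, hP⟩ := hsft
  haveI : Nonempty G := ⟨1⟩
  obtain ⟨e, he⟩ := exists_surjective_nat G
  -- the increasing exhaustion of G by finite windows
  set E0 : Set G := insert (1 : G) (M ∪ Set.image2 (· * ·) M D) with hE0def
  set E : ℕ → Set G := fun n => E0 ∪ (e '' Set.Iio n) with hEdef
  have hE0fin : E0.Finite := ((hMfin.union (Set.Finite.image2 _ hMfin hDfin)).insert 1)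
  have hEfin : ∀ k, (E k).Finite := fun k => hE0fin.union ((Set.finite_Iio k).image e)
  have hEmono : ∀ k, E k ⊆ E (k + 1) := fun k =>
    Set.union_subset_union_right _ (Set.image_mono fun i hi => Nat.lt_succ_of_lt hi)
  have hEle : ∀ ⦃k l : ℕ⦄, k ≤ l → E k ⊆ E l := by
    intro k l h
    induction l, h using Nat.le_induction with
    | base => exact subset_rfl
    | succ l hl ih => exact fun a ha => hEmono l (ih ha)
  have hEcover : ∀ g : G, ∃ k, g ∈ E k := by
    intro g
    obtain ⟨i, rfl⟩ := he g
    exact ⟨i + 1, Or.inr ⟨i, Nat.lt_succ_self i, rfl⟩⟩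
  have hexh : ∀ (F : Set G), F.Finite → ∃ k, F ⊆ E k := by
    intro F hF
    refine ⟨hF.toFinset.sup fun g => (hEcover g).choose, fun g hg => ?_⟩
    exact hEle (Finset.le_sup (hF.mem_toFinset.2 hg)) (hEcover g).choose_spec
  have h1E : ∀ k, (1 : G) ∈ E k := fun k => Or.inl (Set.mem_insert _ _)
  have hME : ∀ k, M ⊆ E k := fun k m hm => Or.inl (Or.inr (Or.inl hm))
  have hMDE : ∀ k, ∀ m ∈ M, ∀ d ∈ D, m * d ∈ E k := fun k m hm d hd =>
    Or.inl (Or.inr (Or.inr (Set.mem_image2_of_mem hm hd)))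
  -- arithmetic of the local defining map μ
  have hτ1 : ∀ w ∈ S, τ w 1 = μ (fun m : ↥M => w ↑m) := by
    intro w hw
    rw [hμ w hw 1]
    exact congrArg μ (funext fun m => (congrArg w (mul_one (↑m : G))))
  have hτ0 : τ 0 = 0 := by
    have h := hadd 0 S.zero_mem 0 S.zero_mem
    rw [add_zero] at h
    have h2 : τ 0 + 0 = τ 0 + τ 0 := by rw [add_zero]; exact h
    exact (add_left_cancel h2).symm
  have hμadd : ∀ u ∈ S, ∀ v ∈ S, μ (fun m : ↥M => u ↑m + v ↑m)
      = μ (fun m : ↥M => u ↑m) + μ (fun m : ↥M => v ↑m) := by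
    intro u hu v hv
    have h1 : τ (u + v) 1 = τ u 1 + τ v 1 := by rw [hadd u hu v hv]; rfl
    have h2 : τ (u + v) 1 = μ (fun m : ↥M => u ↑m + v ↑m) := hτ1 (u + v) (S.add_mem hu hv)
    rw [← h2, h1, hτ1 u hu, hτ1 v hv]
  have hμsmul : ∀ (r : R), ∀ u ∈ S, μ (fun m : ↥M => r • u ↑m)
      = r • μ (fun m : ↥M => u ↑m) := by
    intro r u hu
    have h1 : τ (r • u) 1 = r • τ u 1 := by rw [hsmul r u hu]; rfl
    have h2 : τ (r • u) 1 = μ (fun m : ↥M => r • u ↑m) := hτ1 (r • u) (S.smul_mem r hu)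
    rw [← h2, h1, hτ1 u hu]
  have hμzero : μ (fun _ : ↥M => (0 : A)) = 0 := by
    have h := hτ1 0 S.zero_mem
    rw [hτ0] at h
    exact h.symm
  have hμneg : ∀ u ∈ S, μ (fun m : ↥M => -(u ↑m)) = -μ (fun m : ↥M => u ↑m) := by
    intro u hu
    have h := hμsmul (-1 : R) u hu
    have e : (fun m : ↥M => (-1 : R) • u ↑m) = fun m : ↥M => -(u ↑m) :=
      funext fun m => neg_one_smul R (u ↑m)
    rw [e] at h
    rw [h, neg_one_smul]
  have hμsub : ∀ u ∈ S, ∀ v ∈ S, μ (fun m : ↥M => u ↑m - v ↑m)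
      = μ (fun m : ↥M => u ↑m) - μ (fun m : ↥M => v ↑m) := by
    intro u hu v hv
    have h := hμadd u hu (-v) (S.neg_mem hv)
    have e1 : (fun m : ↥M => u ↑m + (-v) ↑m) = fun m : ↥M => u ↑m - v ↑m :=
      funext fun m => (sub_eq_add_neg (u ↑m) (v ↑m)).symm
    have e2 : (fun m : ↥M => (-v) ↑m) = fun m : ↥M => -(v ↑m) := rfl
    rw [e1, e2] at h
    rw [h, hμneg v hv, sub_eq_add_neg]
  -- the kernel submodules
  set KE : ℕ → Submodule R (G → A) :=
    fun n => Ksub S M (E n) μ (hME n) hμadd hμsmul hμzero with hKEdef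
  have hKanti : ∀ ⦃m n : ℕ⦄, m ≤ n → KE n ≤ KE m := by
    intro m n h x hx
    obtain ⟨hx1, hx2⟩ := (mem_Ksub).1 hx
    exact (mem_Ksub).2 ⟨fun g => (hx1 g).imp
      (fun u hu => ⟨hu.1, fun i hi => hu.2 i (hEle h hi)⟩), hx2⟩
  have hKloc : ∀ n (x : G → A),
      (∀ k, ∃ y ∈ KE n, ∀ g ∈ E k, y g = x g) → x ∈ KE n := by
    intro n x h
    refine (mem_Ksub).2 ⟨fun g => ?_, fun g => ?_⟩
    · obtain ⟨k, hk⟩ := hexh ((fun i => i * g) '' (E n ∪ M))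
        (((hEfin n).union hMfin).image _)
      obtain ⟨y, hyK, hy⟩ := h k
      obtain ⟨u, hu, hu2⟩ := ((mem_Ksub).1 hyK).1 g
      exact ⟨u, hu, fun i hi => (hu2 i hi).trans (hy (i * g) (hk ⟨i, Or.inl hi, rfl⟩))⟩
    · obtain ⟨k, hk⟩ := hexh ((fun i => i * g) '' (E n ∪ M))
        (((hEfin n).union hMfin).image _)
      obtain ⟨y, hyK, hy⟩ := h k
      have e : (fun m : ↥M => x (↑m * g)) = fun m : ↥M => y (↑m * g) :=
        funext fun m => (hy (↑m * g) (hk ⟨↑m, Or.inr m.2, rfl⟩)).symm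
      rw [e]
      exact ((mem_Ksub).1 hyK).2 g
  have hKinv : ∀ n (s : G) (x : G → A), x ∈ KE n → bshift s x ∈ KE n := by
    intro n s x hx
    obtain ⟨hx1, hx2⟩ := (mem_Ksub).1 hx
    refine (mem_Ksub).2 ⟨fun g => ?_, fun g => ?_⟩
    · obtain ⟨u, hu, hu2⟩ := hx1 (g * s)
      refine ⟨u, hu, fun i hi => (hu2 i hi).trans ?_⟩
      show x (i * (g * s)) = x ((i * g) * s)
      rw [mul_assoc]
    · have e : (fun m : ↥M => bshift s x (↑m * g)) = fun m : ↥M => x (↑m * (g * s)) :=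
        funext fun m => congrArg x (mul_assoc (↑m) g s)
      rw [e]
      exact hx2 (g * s)
  -- closedness of Σ: local agreement on all windows implies membership
  have hclosure : ∀ z : G → A, (∀ k, ∃ u ∈ S, ∀ i ∈ E k, u i = z i) → z ∈ S := by
    intro z hz
    letI : TopologicalSpace A := ⊥
    by_contra hzS
    have hopen : IsOpen ((S : Set (G → A))ᶜ) := hclosed.isOpen_compl
    rw [isOpen_pi_iff] at hopen
    obtain ⟨I, u, hIu, hpi⟩ := hopen z hzS
    obtain ⟨k, hk⟩ := hexh ↑I I.finite_toSet
    obtain ⟨y, hyS, hy⟩ := hz k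
    have hymem : y ∈ (I : Set G).pi u := by
      intro i hi
      rw [hy i (hk hi)]
      exact (hIu i hi).2
    exact (hpi hymem) hyS
  -- elements of all kernels are zero
  have hKinter : ∀ z : G → A, (∀ n, z ∈ KE n) → z = 0 := by
    intro z hz
    have hzS : z ∈ S := by
      refine hclosure z fun k => ?_
      obtain ⟨u, hu, hu2⟩ := ((mem_Ksub).1 (hz k)).1 1
      exact ⟨u, hu, fun i hi => (hu2 i hi).trans (congrArg z (mul_one i))⟩
    have hτz : τ z = 0 := by
      funext g
      have h1 : τ z g = μ (fun m : ↥M => z (↑m * g)) := hμ z hzS g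
      rw [h1]
      exact ((mem_Ksub).1 (hz 0)).2 g
    exact hinj hzS S.zero_mem (hτz.trans hτ0.symm)
  -- Artinian stabilization of the restrictions to the window {1}
  set single : Set G := {1} with hsingledef
  have hsinglesub : single ⊆ E 0 := by
    intro g hg
    have : g = 1 := hg
    rw [this]; exact h1E 0
  haveI : Finite ↥single := (Set.finite_singleton (1 : G)).to_subtype
  obtain ⟨N, hN⟩ := IsArtinian.monotone_stabilizes
    (⟨fun n => OrderDual.toDual ((KE n).map (resL (R := R) single)),
      fun m n h => Submodule.map_mono (hKanti h)⟩ : ℕ →o (Submodule R (↥single → A))ᵒᵈ)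
  have hQbot : ∀ q ∈ (KE N).map (resL (R := R) single), q = 0 := by
    intro q hq
    have hqn : ∀ n, q ∈ (KE n).map (resL (R := R) single) := by
      intro n
      rcases le_total n N with h | h
      · exact Submodule.map_mono (hKanti h) hq
      · have hEq : (KE N).map (resL (R := R) single)
            = (KE n).map (resL (R := R) single) := hN n h
        rw [← hEq]
        exact hq
    obtain ⟨x, hxK, hxq⟩ := ML E hEfin hEmono hEcover KE hKanti hKloc hsinglesub q hqn
    have hx0 : x = 0 := hKinter x hxK
    funext i
    have h1 : i = ⟨1, rfl⟩ := Subtype.ext i.2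
    rw [h1, ← hxq 1 rfl, hx0]
    rfl
  have hKN0 : ∀ z ∈ KE N, z = 0 := by
    intro z hz
    funext s
    have h1 : bshift s z ∈ KE N := hKinv N s z hz
    have h2 : resL (R := R) single (bshift s z) = 0 :=
      hQbot _ (Submodule.mem_map_of_mem h1)
    have h3 := congrFun h2 ⟨1, rfl⟩
    have h4 : z (1 * s) = 0 := h3
    rw [one_mul] at h4
    exact h4
  -- conclusion: Δ is the SFT with window E N and pattern set resSet Δ (E N)
  refine ⟨E N, hEfin N, resSet Δ (E N), Set.Subset.antisymm ?_ ?_⟩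
  · intro x hx g
    exact ⟨bshift g x, hΔ g x hx, rfl⟩
  · intro x hx
    have hwin : ∀ g : G, ∃ y ∈ Δ, ∀ i ∈ E N, y i = x (i * g) := by
      intro g
      obtain ⟨y, hyΔ, hy⟩ := hx g
      exact ⟨y, hyΔ, fun i hi => congrFun hy ⟨i, hi⟩⟩
    -- the extended local image of x
    set θ : G → A := fun g => μ (fun m : ↥M => x (↑m * g)) with hθdef
    have hθwin : θ ∈ windowSet D P := by
      intro g
      obtain ⟨y, hyΔ, hy⟩ := hwin g
      have hτyP : (fun d : ↥D => bshift 1 (τ y) ↑d) ∈ P := by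
        have hmem : τ y ∈ windowSet D P := by
          rw [← hP]
          exact Set.mem_image_of_mem τ hyΔ
        exact hmem 1
      have e : (fun d : ↥D => bshift g θ ↑d) = fun d : ↥D => bshift 1 (τ y) ↑d := by
        funext d
        show θ (↑d * g) = τ y (↑d * 1)
        rw [hμ y (hΔS hyΔ) (↑d * 1)]
        show μ (fun m : ↥M => x (↑m * (↑d * g))) = μ (fun m : ↥M => y (↑m * (↑d * 1)))
        refine congrArg μ (funext fun m => ?_)
        rw [mul_one (↑d : G), hy (↑m * ↑d) (hMDE N ↑m m.2 ↑d d.2), mul_assoc]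
      rw [e]
      exact hτyP
    have hθim : θ ∈ τ '' Δ := by rw [hP]; exact hθwin
    obtain ⟨y₀, hy₀Δ, hy₀τ⟩ := hθim
    have hy₀S : y₀ ∈ S := hΔS hy₀Δ
    have hzK : x - y₀ ∈ KE N := by
      refine (mem_Ksub).2 ⟨fun g => ?_, fun g => ?_⟩
      · obtain ⟨y, hyΔ, hy⟩ := hwin g
        refine ⟨y - bshift g y₀, S.sub_mem (hΔS hyΔ) (hsub g y₀ hy₀S), fun i hi => ?_⟩
        show y i - bshift g y₀ i = x (i * g) - y₀ (i * g)
        rw [hy i hi]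
        rfl
      · obtain ⟨y, hyΔ, hy⟩ := hwin g
        have e1 : (fun m : ↥M => (x - y₀) (↑m * g))
            = fun m : ↥M => y ↑m - (bshift g y₀) ↑m :=
          funext fun m => by
            show x (↑m * g) - y₀ (↑m * g) = y ↑m - bshift g y₀ ↑m
            rw [hy ↑m (hME N m.2)]
            rfl
        rw [e1, hμsub y (hΔS hyΔ) (bshift g y₀) (hsub g y₀ hy₀S)]
        have e2 : μ (fun m : ↥M => y ↑m) = θ g :=
          congrArg μ (funext fun m => hy ↑m (hME N m.2))
        have e3 : μ (fun m : ↥M => (bshift g y₀) ↑m) = θ g := by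
          have h1 : τ y₀ g = μ (fun m : ↥M => bshift g y₀ ↑m) := hμ y₀ hy₀S g
          rw [← h1, hy₀τ]
        rw [e2, e3, sub_self]
    have hz0 : x - y₀ = 0 := hKN0 _ hzK
    have hxy : x = y₀ := sub_eq_zero.1 hz0
    rw [hxy]
    exact hy₀Δ
end

section
/- Let G be a countable monoid, let R be a ring, and let A be an Artinian R-module. Let Σ ⊂ A^G be a subshift that is an R-submodule of A^G and is closed in the prodiscrete topology, and let τ : Σ → A^G be an injective cellular automaton that is also a homomorphism of R-modules. Then for every subshift Δ ⊂ A^G with Δ ⊂ Σ: (i) Δ is a subshift of finite type if and only if τ(Δ) is a subshift of finite type; (ii) Δ is a sofic subshift if and only if τ(Δ) is a sofic subshift. -/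
/-! ### Auxiliary lemmas -/

/-- Composition of a cellular automaton on `W` landing in `T` with a map admitting a
local description on `T` is a cellular automaton on `W`. -/
lemma aux_ca_comp {G A B C : Type} [Monoid G] {W : Set (G → C)} {γ : (G → C) → (G → B)}
    {θ : (G → B) → (G → A)} {T : Set (G → B)} (hγT : ∀ w ∈ W, γ w ∈ T)
    {M₁ : Set G} (hM₁ : M₁.Finite) {μ₁ : (↥M₁ → C) → B}
    (hμ₁ : ∀ w ∈ W, ∀ g : G, γ w g = μ₁ (fun m : ↥M₁ => w (↑m * g)))
    {N : Set G} (hN : N.Finite) {ν : (↥N → B) → A}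
    (hν : ∀ y ∈ T, ∀ g : G, θ y g = ν (fun n : ↥N => y (↑n * g))) :
    IsCA W (fun w => θ (γ w)) := by
  refine ⟨Set.image2 (· * ·) M₁ N, hM₁.image2 _ hN,
    fun z => ν (fun n : ↥N => μ₁ (fun m : ↥M₁ => z ⟨↑m * ↑n, Set.mem_image2_of_mem m.2 n.2⟩)),
    ?_⟩
  intro w hw g
  show θ (γ w) g = ν (fun n : ↥N => μ₁ (fun m : ↥M₁ => w ((↑m * ↑n) * g)))
  rw [hν (γ w) (hγT w hw) g]
  congr 1
  funext n
  rw [hμ₁ w hw (↑n * g)]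
  congr 1
  funext m
  rw [mul_assoc]

/-- If `τ` admits a local inverse `ν` on `S`, the image of an SFT `Δ ⊆ S` is an SFT. -/
lemma aux_sft_image {G A : Type} [Monoid G] {S : Set (G → A)} {τ : (G → A) → (G → A)}
    {M : Set G} (hM : M.Finite) {μ : (↥M → A) → A}
    (hμ : ∀ x ∈ S, ∀ g : G, τ x g = μ (fun m : ↥M => x (↑m * g)))
    {N : Set G} (hN : N.Finite) {ν : (↥N → A) → A}
    (hν : ∀ x ∈ S, ∀ g : G, x g = ν (fun n : ↥N => τ x (↑n * g)))
    {Δ : Set (G → A)} (hΔS : Δ ⊆ S) (h : IsSFT Δ) : IsSFT (τ '' Δ) := by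
  obtain ⟨D, hDfin, P, hD⟩ := h
  have h1 : (1 : G) ∈ insert (1 : G) (Set.image2 (· * ·) N D ∪ Set.image2 (· * ·) N M) :=
    Set.mem_insert _ _
  have hnd : ∀ (n : ↥N) (d : ↥D),
      (↑n * ↑d : G) ∈ insert (1 : G) (Set.image2 (· * ·) N D ∪ Set.image2 (· * ·) N M) :=
    fun n d => Set.mem_insert_iff.mpr (Or.inr (Or.inl (Set.mem_image2_of_mem n.2 d.2)))
  have hnm : ∀ (n : ↥N) (m : ↥M),
      (↑n * ↑m : G) ∈ insert (1 : G) (Set.image2 (· * ·) N D ∪ Set.image2 (· * ·) N M) :=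
    fun n m => Set.mem_insert_iff.mpr (Or.inr (Or.inr (Set.mem_image2_of_mem n.2 m.2)))
  refine ⟨insert (1 : G) (Set.image2 (· * ·) N D ∪ Set.image2 (· * ·) N M),
    (((hN.image2 _ hDfin).union (hN.image2 _ hM)).insert 1),
    {z | (fun d : ↥D => ν (fun n : ↥N => z ⟨↑n * ↑d, hnd n d⟩)) ∈ P ∧
      z ⟨1, h1⟩ = μ (fun m : ↥M => ν (fun n : ↥N => z ⟨↑n * ↑m, hnm n m⟩))}, ?_⟩
  ext y
  constructor
  · rintro ⟨x, hxΔ, rfl⟩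
    have hxS : x ∈ S := hΔS hxΔ
    intro g
    refine ⟨?_, ?_⟩
    · show (fun d : ↥D => ν (fun n : ↥N => τ x ((↑n * ↑d) * g))) ∈ P
      have he : (fun d : ↥D => ν (fun n : ↥N => τ x ((↑n * ↑d) * g)))
          = fun d : ↥D => x (↑d * g) := by
        funext d
        rw [hν x hxS (↑d * g)]
        congr 1
        funext n
        rw [mul_assoc]
      rw [he]
      exact (hD ▸ hxΔ) g
    · show τ x (1 * g) = μ (fun m : ↥M => ν (fun n : ↥N => τ x ((↑n * ↑m) * g)))
      have he : (fun m : ↥M => ν (fun n : ↥N => τ x ((↑n * ↑m) * g)))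
          = fun m : ↥M => x (↑m * g) := by
        funext m
        rw [hν x hxS (↑m * g)]
        congr 1
        funext n
        rw [mul_assoc]
      rw [he, one_mul, hμ x hxS g]
  · intro hy
    have hxΔ : (fun g => ν (fun n : ↥N => y (↑n * g))) ∈ Δ := by
      rw [hD]
      intro g
      have hcond : (fun d : ↥D => ν (fun n : ↥N => y ((↑n * ↑d) * g))) ∈ P := (hy g).1
      show (fun d : ↥D => ν (fun n : ↥N => y (↑n * (↑d * g)))) ∈ P
      have he : (fun d : ↥D => ν (fun n : ↥N => y (↑n * (↑d * g))))
          = fun d : ↥D => ν (fun n : ↥N => y ((↑n * ↑d) * g)) := by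
        funext d
        congr 1
        funext n
        rw [mul_assoc]
      rw [he]
      exact hcond
    have hxS : (fun g => ν (fun n : ↥N => y (↑n * g))) ∈ S := hΔS hxΔ
    refine ⟨fun g => ν (fun n : ↥N => y (↑n * g)), hxΔ, ?_⟩
    funext g
    have hcond : y (1 * g) = μ (fun m : ↥M => ν (fun n : ↥N => y ((↑n * ↑m) * g))) :=
      (hy g).2
    have he : (fun m : ↥M => ν (fun n : ↥N => y ((↑n * ↑m) * g)))
        = fun m : ↥M => ν (fun n : ↥N => y (↑n * (↑m * g))) := by
      funext m
      congr 1
      funext n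
      rw [mul_assoc]
    rw [one_mul, he] at hcond
    rw [hμ _ hxS g]
    exact hcond.symm

/-- If `τ` admits a local inverse `ν` on `S`, preimages of SFT images are SFTs. -/
lemma aux_sft_preimage {G A : Type} [Monoid G] {S : Set (G → A)} {τ : (G → A) → (G → A)}
    {M : Set G} (hM : M.Finite) {μ : (↥M → A) → A}
    (hμ : ∀ x ∈ S, ∀ g : G, τ x g = μ (fun m : ↥M => x (↑m * g)))
    {N : Set G} (hN : N.Finite) {ν : (↥N → A) → A}
    (hν : ∀ x ∈ S, ∀ g : G, x g = ν (fun n : ↥N => τ x (↑n * g)))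
    {Δ : Set (G → A)} (hΔS : Δ ⊆ S) (h : IsSFT (τ '' Δ)) : IsSFT Δ := by
  obtain ⟨D, hDfin, P, hD⟩ := h
  have h1 : (1 : G) ∈ insert (1 : G) (Set.image2 (· * ·) M N ∪ Set.image2 (· * ·) M D) :=
    Set.mem_insert _ _
  have hmn : ∀ (m : ↥M) (n : ↥N),
      (↑m * ↑n : G) ∈ insert (1 : G) (Set.image2 (· * ·) M N ∪ Set.image2 (· * ·) M D) :=
    fun m n => Set.mem_insert_iff.mpr (Or.inr (Or.inl (Set.mem_image2_of_mem m.2 n.2)))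
  have hmd : ∀ (m : ↥M) (d : ↥D),
      (↑m * ↑d : G) ∈ insert (1 : G) (Set.image2 (· * ·) M N ∪ Set.image2 (· * ·) M D) :=
    fun m d => Set.mem_insert_iff.mpr (Or.inr (Or.inr (Set.mem_image2_of_mem m.2 d.2)))
  refine ⟨insert (1 : G) (Set.image2 (· * ·) M N ∪ Set.image2 (· * ·) M D),
    (((hM.image2 _ hN).union (hM.image2 _ hDfin)).insert 1),
    {z | z ⟨1, h1⟩ = ν (fun n : ↥N => μ (fun m : ↥M => z ⟨↑m * ↑n, hmn m n⟩)) ∧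
      (fun d : ↥D => μ (fun m : ↥M => z ⟨↑m * ↑d, hmd m d⟩)) ∈ P}, ?_⟩
  ext x
  constructor
  · intro hxΔ
    have hxS : x ∈ S := hΔS hxΔ
    intro g
    refine ⟨?_, ?_⟩
    · show x (1 * g) = ν (fun n : ↥N => μ (fun m : ↥M => x ((↑m * ↑n) * g)))
      have he : (fun n : ↥N => μ (fun m : ↥M => x ((↑m * ↑n) * g)))
          = fun n : ↥N => τ x (↑n * g) := by
        funext n
        rw [hμ x hxS (↑n * g)]
        congr 1
        funext m
        rw [mul_assoc]
      rw [he, one_mul, hν x hxS g]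
    · show (fun d : ↥D => μ (fun m : ↥M => x ((↑m * ↑d) * g))) ∈ P
      have he : (fun d : ↥D => μ (fun m : ↥M => x ((↑m * ↑d) * g)))
          = fun d : ↥D => τ x (↑d * g) := by
        funext d
        rw [hμ x hxS (↑d * g)]
        congr 1
        funext m
        rw [mul_assoc]
      rw [he]
      have hτx : τ x ∈ windowSet D P := hD ▸ Set.mem_image_of_mem τ hxΔ
      exact hτx g
  · intro hx
    have hyW : (fun g => μ (fun m : ↥M => x (↑m * g))) ∈ windowSet D P := by
      intro g
      have hcond : (fun d : ↥D => μ (fun m : ↥M => x ((↑m * ↑d) * g))) ∈ P := (hx g).2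
      show (fun d : ↥D => μ (fun m : ↥M => x (↑m * (↑d * g)))) ∈ P
      have he : (fun d : ↥D => μ (fun m : ↥M => x (↑m * (↑d * g))))
          = fun d : ↥D => μ (fun m : ↥M => x ((↑m * ↑d) * g)) := by
        funext d
        congr 1
        funext m
        rw [mul_assoc]
      rw [he]
      exact hcond
    rw [← hD] at hyW
    obtain ⟨x₀, hx₀Δ, hyx₀⟩ := hyW
    have hx₀S : x₀ ∈ S := hΔS hx₀Δ
    have hxx₀ : x = x₀ := by
      funext g
      have hcond : x (1 * g) = ν (fun n : ↥N => μ (fun m : ↥M => x ((↑m * ↑n) * g))) :=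
        (hx g).1
      have he : (fun n : ↥N => μ (fun m : ↥M => x ((↑m * ↑n) * g)))
          = fun n : ↥N => τ x₀ (↑n * g) := by
        funext n
        have hthis : τ x₀ (↑n * g) = μ (fun m : ↥M => x (↑m * (↑n * g))) :=
          congrFun hyx₀ (↑n * g)
        rw [hthis]
        congr 1
        funext m
        rw [mul_assoc]
      rw [one_mul, he, ← hν x₀ hx₀S g] at hcond
      exact hcond
    rw [hxx₀]
    exact hx₀Δ

/-- **Key lemma**: an injective linear cellular automaton on a closed subshift submodule
over an Artinian module admits a local inverse with finite window. -/
lemma aux_exists_nu {G R A : Type} [Monoid G] [Countable G]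
    [Ring R] [AddCommGroup A] [Module R A] [IsArtinian R A]
    (S : Submodule R (G → A)) (hsub : IsSubshift (S : Set (G → A)))
    (hclosed : @IsClosed (G → A) (@Pi.topologicalSpace G (fun _ => A) (fun _ => ⊥))
      (S : Set (G → A)))
    (τ : (G → A) → (G → A)) (M : Set G) (hM : M.Finite) (μ : (↥M → A) → A)
    (hμ : ∀ x ∈ (S : Set (G → A)), ∀ g : G, τ x g = μ (fun m : ↥M => x (↑m * g)))
    (hinj : Set.InjOn τ (S : Set (G → A)))
    (hadd : ∀ x ∈ S, ∀ y ∈ S, τ (x + y) = τ x + τ y)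
    (hsmul : ∀ r : R, ∀ x ∈ S, τ (r • x) = r • τ x) :
    ∃ N : Set G, N.Finite ∧ ∃ ν : (↥N → A) → A,
      ∀ x ∈ (S : Set (G → A)), ∀ g : G, x g = ν (fun n : ↥N => τ x (↑n * g)) := by
  classical
  letI : TopologicalSpace A := ⊥
  haveI : DiscreteTopology A := ⟨rfl⟩
  haveI : Nonempty G := ⟨1⟩
  have h0S : (0 : G → A) ∈ S := S.zero_mem
  have hτ0 : τ 0 = 0 := by
    have h := hadd 0 h0S 0 h0S
    rw [add_zero] at h
    have := add_left_cancel (a := τ 0) (b := τ 0) (c := 0) (by rw [add_zero, ← h])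
    exact this
  have hsubst : ∀ x ∈ (S : Set (G → A)), ∀ y ∈ (S : Set (G → A)),
      τ (x - y) = τ x - τ y := by
    intro x hx y hy
    have hxy : x - y ∈ S := S.sub_mem hx hy
    have h := hadd y hy (x - y) hxy
    rw [add_sub_cancel] at h
    rw [h]
    abel
  obtain ⟨e, he⟩ := exists_surjective_nat G
  choose idx hidx using he
  set F : ℕ → Set G := fun k => {1} ∪ e '' {i | i < k} with hF
  have hFfin : ∀ k, (F k).Finite :=
    fun k => (Set.finite_singleton 1).union ((Set.finite_Iio k).image e)
  have hFmono : ∀ {k k'}, k ≤ k' → F k ⊆ F k' := by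
    intro k k' h
    exact Set.union_subset_union_right _ (Set.image_mono (f := e) (fun i hi => lt_of_lt_of_le hi h))
  have hF1 : ∀ k, (1 : G) ∈ F k := fun k => Or.inl rfl
  have hgF : ∀ g : G, g ∈ F (idx g + 1) :=
    fun g => Or.inr ⟨idx g, Nat.lt_succ_self _, hidx g⟩
  have hFcov : ∀ E : Set G, E.Finite → ∃ k, E ⊆ F k := by
    intro E hE
    refine ⟨hE.toFinset.sup idx + 1, fun g hg => ?_⟩
    have : idx g < hE.toFinset.sup idx + 1 :=
      Nat.lt_succ_of_le (Finset.le_sup (hE.mem_toFinset.mpr hg))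
    exact Or.inr ⟨idx g, this, hidx g⟩
  -- the submodules W n
  set W : ℕ → Submodule R (G → A) := fun n =>
    { carrier := {x : G → A | x ∈ S ∧ ∀ g ∈ F n, τ x g = 0}
      add_mem' := by
        rintro x y ⟨hxS, hx⟩ ⟨hyS, hy⟩
        refine ⟨S.add_mem hxS hyS, fun g hg => ?_⟩
        rw [hadd x hxS y hyS]
        show τ x g + τ y g = 0
        rw [hx g hg, hy g hg, add_zero]
      zero_mem' := ⟨S.zero_mem, fun g _ => by rw [hτ0]; rfl⟩
      smul_mem' := by
        rintro r x ⟨hxS, hx⟩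
        refine ⟨S.smul_mem r hxS, fun g hg => ?_⟩
        rw [hsmul r x hxS]
        show r • τ x g = 0
        rw [hx g hg, smul_zero] } with hW
  have hWanti : ∀ {n n'}, n ≤ n' → W n' ≤ W n :=
    fun {n n'} h x hx => ⟨hx.1, fun g hg => hx.2 g (hFmono h hg)⟩
  -- the restriction maps
  set r : (E : Set G) → ((G → A) →ₗ[R] (↥E → A)) :=
    fun E => LinearMap.funLeft R A Subtype.val with hr
  -- stabilization of antitone chains
  have stab : ∀ (k : ℕ) (T : ℕ → Submodule R (↥(F k) → A)),
      (∀ {n n'}, n ≤ n' → T n' ≤ T n) → ∃ n₀, ∀ n, n₀ ≤ n → T n = T n₀ := by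
    intro k T hT
    haveI := (hFfin k).to_subtype
    obtain ⟨n₀, hn₀⟩ := IsArtinian.monotone_stabilizes (R := R) (M := ↥(F k) → A)
      ⟨fun n => OrderDual.toDual (T n), fun a b h => hT h⟩
    exact ⟨n₀, fun n hn => congrArg OrderDual.ofDual (hn₀ n hn).symm⟩
  -- Mittag-Leffler step
  have step : ∀ (k k' : ℕ) (hkk' : k ≤ k') (a : ↥(F k) → A),
      (∀ n, a ∈ (W n).map (r (F k))) →
      ∃ b : ↥(F k') → A, (∀ n, b ∈ (W n).map (r (F k'))) ∧
        ∀ (g : G) (hg : g ∈ F k), b ⟨g, hFmono hkk' hg⟩ = a ⟨g, hg⟩ := by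
    intro k k' hkk' a ha
    choose w hw hwa using fun n => ha n
    obtain ⟨n₁, hn₁⟩ := stab k'
      (fun n => ((W n) ⊓ LinearMap.ker (r (F k))).map (r (F k')))
      (fun {n n'} h => Submodule.map_mono (inf_le_inf_right _ (hWanti h)))
    refine ⟨r (F k') (w n₁), ?_, ?_⟩
    · intro n
      rcases le_or_gt n n₁ with h | h
      · exact Submodule.mem_map_of_mem (hWanti h (hw n₁))
      · have hd : w n₁ - w n ∈ (W n₁) ⊓ LinearMap.ker (r (F k)) := by
          refine Submodule.mem_inf.mpr
            ⟨(W n₁).sub_mem (hw n₁) (hWanti h.le (hw n)), LinearMap.mem_ker.mpr ?_⟩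
          rw [map_sub, hwa, hwa, sub_self]
        have hmem : r (F k') (w n₁ - w n) ∈
            ((W n) ⊓ LinearMap.ker (r (F k))).map (r (F k')) := by
          rw [hn₁ n h.le]
          exact Submodule.mem_map_of_mem hd
        obtain ⟨u, ⟨huW, _⟩, hu⟩ := hmem
        refine ⟨u + w n, (W n).add_mem huW (hw n), ?_⟩
        rw [map_add, hu, map_sub]
        abel
    · intro g hg
      exact congrFun (hwa n₁) ⟨g, hg⟩
  -- the diagonal argument
  have diag : ∀ a : ↥(F 0) → A, (∀ n, a ∈ (W n).map (r (F 0))) →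
      ∀ u : ↥(F 0), a u = 0 := by
    intro a ha
    let c : ∀ k, {b : ↥(F k) → A // ∀ n, b ∈ (W n).map (r (F k))} := fun k =>
      Nat.rec ⟨a, ha⟩ (fun k ih =>
        ⟨(step k (k+1) (Nat.le_succ k) ih.1 ih.2).choose,
          (step k (k+1) (Nat.le_succ k) ih.1 ih.2).choose_spec.1⟩) k
    have hcsucc : ∀ k (g : G) (hg : g ∈ F k),
        (c (k+1)).1 ⟨g, hFmono (Nat.le_succ k) hg⟩ = (c k).1 ⟨g, hg⟩ :=
      fun k => (step k (k+1) (Nat.le_succ k) (c k).1 (c k).2).choose_spec.2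
    have hcmono : ∀ (k k' : ℕ) (h : k ≤ k') (g : G) (hg : g ∈ F k),
        (c k').1 ⟨g, hFmono h hg⟩ = (c k).1 ⟨g, hg⟩ := by
      intro k k' h
      induction k', h using Nat.le_induction with
      | base => intro g hg; rfl
      | succ k' hk ih =>
        intro g hg
        have h1 := hcsucc k' g (hFmono hk hg)
        exact h1.trans (ih g hg)
    set x : G → A := fun g => (c (idx g + 1)).1 ⟨g, hgF g⟩ with hxdef
    have hx : ∀ (k : ℕ) (g : G) (hg : g ∈ F k), x g = (c k).1 ⟨g, hg⟩ := by
      intro k g hg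
      have h1 := hcmono (idx g + 1) (max (idx g + 1) k) (le_max_left _ _) g (hgF g)
      have h2 := hcmono k (max (idx g + 1) k) (le_max_right _ _) g hg
      exact (h1.symm.trans h2 : _)
    have hxS : x ∈ (S : Set (G → A)) := by
      have hcl : x ∈ closure (S : Set (G → A)) := by
        rw [mem_closure_iff]
        intro o ho hxo
        obtain ⟨I, u, hu, hI⟩ := isOpen_pi_iff.mp ho x hxo
        obtain ⟨k, hk⟩ := hFcov ↑I I.finite_toSet
        obtain ⟨v, hvW, hvr⟩ := (c k).2 0
        refine ⟨v, hI ?_, hvW.1⟩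
        intro i hi
        have hiF : i ∈ F k := hk hi
        have : v i = x i := by
          have h1 := congrFun hvr ⟨i, hiF⟩
          have h2 := hx k i hiF
          exact (h1.trans h2.symm : _)
        rw [this]
        exact (hu i hi).2
      exact hclosed.closure_subset hcl
    have hτx : ∀ g, τ x g = 0 := by
      intro g
      obtain ⟨k, hk⟩ := hFcov ((fun m => m * g) '' M ∪ F (idx g + 1))
        ((hM.image _).union (hFfin _))
      obtain ⟨v, hvW, hvr⟩ := (c k).2 (idx g + 1)
      have hag : ∀ m : ↥M, x (↑m * g) = v (↑m * g) := by
        intro m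
        have hmem : (↑m * g : G) ∈ F k := hk (Or.inl ⟨↑m, m.2, rfl⟩)
        have h1 := congrFun hvr ⟨↑m * g, hmem⟩
        have h2 := hx k (↑m * g) hmem
        exact (h2.trans h1.symm : _)
      calc τ x g = μ (fun m : ↥M => x (↑m * g)) := hμ x hxS g
        _ = μ (fun m : ↥M => v (↑m * g)) := by congr 1; funext m; exact hag m
        _ = τ v g := (hμ v hvW.1 g).symm
        _ = 0 := hvW.2 g (hgF g)
    have hx0 : x = 0 := by
      refine hinj hxS h0S ?_
      funext g
      rw [hτx g, hτ0]
      rfl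
    intro u
    have h2 : a u = x ↑u := (hx 0 ↑u u.2).symm
    rw [h2, hx0]
    rfl
  -- conclusion: the stabilized window works
  obtain ⟨n₀, hn₀⟩ := stab 0 (fun n => (W n).map (r (F 0)))
    (fun {n n'} h => Submodule.map_mono (hWanti h))
  have hdet0 : ∀ w ∈ (S : Set (G → A)), (∀ n : ↥(F n₀), τ w ↑n = 0) → w 1 = 0 := by
    intro w hwS hw0
    have hwW : w ∈ W n₀ := ⟨hwS, fun g hg => hw0 ⟨g, hg⟩⟩
    have hall : ∀ n, r (F 0) w ∈ (W n).map (r (F 0)) := by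
      intro n
      rcases le_or_gt n n₀ with h | h
      · exact Submodule.mem_map_of_mem (hWanti h hwW)
      · rw [hn₀ n h.le]
        exact Submodule.mem_map_of_mem hwW
    exact diag (r (F 0) w) hall ⟨1, hF1 0⟩
  have hdet : ∀ x ∈ (S : Set (G → A)), ∀ x' ∈ (S : Set (G → A)),
      (∀ n : ↥(F n₀), τ x ↑n = τ x' ↑n) → x 1 = x' 1 := by
    intro x hx x' hx' h
    have h1 : x - x' ∈ (S : Set (G → A)) := S.sub_mem hx hx'
    have h2 := hdet0 (x - x') h1 (fun n => by
      rw [hsubst x hx x' hx']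
      show τ x ↑n - τ x' ↑n = 0
      rw [h n, sub_self])
    have h3 : x 1 - x' 1 = 0 := h2
    exact sub_eq_zero.mp h3
  refine ⟨F n₀, hFfin n₀, ?_⟩
  set ν : (↥(F n₀) → A) → A := fun z =>
    if h : ∃ x, x ∈ (S : Set (G → A)) ∧ (fun n : ↥(F n₀) => τ x ↑n) = z
    then h.choose 1 else 0 with hν
  have key : ∀ x ∈ (S : Set (G → A)), x 1 = ν (fun n : ↥(F n₀) => τ x ↑n) := by
    intro x hx
    have hT : ∃ x', x' ∈ (S : Set (G → A)) ∧
        (fun n : ↥(F n₀) => τ x' ↑n) = (fun n : ↥(F n₀) => τ x ↑n) := ⟨x, hx, rfl⟩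
    rw [hν]
    simp only [dif_pos hT]
    exact (hdet _ hT.choose_spec.1 x hx (fun n => congrFun hT.choose_spec.2 n)).symm
  refine ⟨ν, ?_⟩
  intro x hx g
  have hbx : bshift g x ∈ (S : Set (G → A)) := hsub g x hx
  have h1 := key _ hbx
  have h2 : ∀ n : ↥(F n₀), τ (bshift g x) ↑n = τ x (↑n * g) := by
    intro n
    rw [hμ _ hbx ↑n, hμ x hx (↑n * g)]
    congr 1
    funext m
    show x ((↑m * ↑n) * g) = x (↑m * (↑n * g))
    rw [mul_assoc]
  calc x g = x (1 * g) := by rw [one_mul]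
    _ = (bshift g x) 1 := rfl
    _ = ν (fun n : ↥(F n₀) => τ (bshift g x) ↑n) := h1
    _ = ν (fun n : ↥(F n₀) => τ x (↑n * g)) := by congr 1; funext n; exact h2 n

/-- Theorem 8.4, Artinian-module instance. Let `G` be a countable monoid,
`A` an Artinian `R`-module, `Σ ⊆ A^G` a closed subshift submodule and `τ : Σ → A^G` an
injective cellular automaton which is an `R`-module homomorphism. Then for every subshift
`Δ ⊆ Σ`: (i) `Δ` is of finite type iff `τ(Δ)` is; (ii) `Δ` is sofic iff `τ(Δ)` is. -/
theorem image_subshift_artinian_iff {G R A : Type} [Monoid G] [Countable G]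
    [Ring R] [AddCommGroup A] [Module R A] [IsArtinian R A]
    (S : Submodule R (G → A)) (hsub : IsSubshift (S : Set (G → A)))
    (hclosed : @IsClosed (G → A) (@Pi.topologicalSpace G (fun _ => A) (fun _ => ⊥))
      (S : Set (G → A)))
    (τ : (G → A) → (G → A))
    (hca : IsCA (S : Set (G → A)) τ)
    (hinj : Set.InjOn τ (S : Set (G → A)))
    (hadd : ∀ x ∈ S, ∀ y ∈ S, τ (x + y) = τ x + τ y)
    (hsmul : ∀ r : R, ∀ x ∈ S, τ (r • x) = r • τ x)
    (Δ : Set (G → A)) (hΔ : IsSubshift Δ) (hΔS : Δ ⊆ (S : Set (G → A))) :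
    (IsSFT Δ ↔ IsSFT (τ '' Δ)) ∧ (IsSofic Δ ↔ IsSofic (τ '' Δ)) := by
  obtain ⟨M, hMfin, μ, hμ'⟩ := hca
  have hμ : ∀ x ∈ (S : Set (G → A)), ∀ g : G, τ x g = μ (fun m : ↥M => x (↑m * g)) := hμ'
  obtain ⟨N, hNfin, ν, hν⟩ :=
    aux_exists_nu S hsub hclosed τ M hMfin μ hμ hinj hadd hsmul
  constructor
  · constructor
    · exact fun h => aux_sft_image hMfin hμ hNfin hν hΔS h
    · exact fun h => aux_sft_preimage hMfin hμ hNfin hν hΔS h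
  · constructor
    · rintro ⟨C, W, γ, hWsft, ⟨M₁, hM₁, μ₁, hμ₁⟩, hΔeq⟩
      refine ⟨C, W, fun w => τ (γ w), hWsft, ?_, ?_⟩
      · exact aux_ca_comp (T := (S : Set (G → A)))
          (fun w hw => hΔS (hΔeq ▸ Set.mem_image_of_mem γ hw)) hM₁ hμ₁ hMfin hμ
      · rw [hΔeq, Set.image_image]
    · rintro ⟨C, W, γ, hWsft, ⟨M₁, hM₁, μ₁, hμ₁⟩, hτΔeq⟩
      have hστ : ∀ x ∈ (S : Set (G → A)),
          (fun g => ν (fun n : ↥N => τ x (↑n * g))) = x :=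
        fun x hx => funext fun g => (hν x hx g).symm
      refine ⟨C, W, fun w => (fun y : G → A => fun g => ν (fun n : ↥N => y (↑n * g))) (γ w),
        hWsft, ?_, ?_⟩
      · exact aux_ca_comp (T := (Set.univ : Set (G → A)))
          (fun _ _ => Set.mem_univ _) hM₁ hμ₁ hNfin (fun y _ g => rfl)
      · have himg : (fun w => (fun y : G → A => fun g => ν (fun n : ↥N => y (↑n * g))) (γ w)) '' W
            = (fun y : G → A => fun g => ν (fun n : ↥N => y (↑n * g))) '' (γ '' W) :=
          (Set.image_image (fun y : G → A => fun g => ν (fun n : ↥N => y (↑n * g))) γ W).symm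
        rw [himg, ← hτΔeq]
        ext d
        constructor
        · intro hd
          exact ⟨τ d, Set.mem_image_of_mem τ hd, hστ d (hΔS hd)⟩
        · rintro ⟨y, ⟨x, hxΔ, rfl⟩, rfl⟩
          show (fun g => ν (fun n : ↥N => τ x (↑n * g))) ∈ Δ
          rw [hστ x (hΔS hxΔ)]
          exact hxΔ
end
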